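/- arXiv:2406.19499 — 5 statements merged into one kernel-verified Lean document; each statement's English description precedes it below -/
import Mathlib

section
/- Suppose all potentials U_k and V_k are smooth, U_k''(x) > 0 and V_k''(x) > 0 for all x ∈ ℝ, and U_k'(0) = 0 and V_k'(0) = 0 (each potential is strictly convex with minimum at 0). Then for every (p,q) ∈ ℝ^{2N} with (p,q) ≠ (0,0) there exists an integer k with 1 ≤ k ≤ 4N−1 such that L_F^k H(p,q) ≠ 0. -/
open Real Finset
open scoped ContDiff

noncomputable section

/-- Iterated Lie derivative `L_F^k g` of `g` along the vector field `F`. -/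
def iterLie {E : Type*} [NormedAddCommGroup E] [NormedSpace ℝ E]
    (F : E → E) : ℕ → (E → ℝ) → E → ℝ
  | 0 => fun g => g
  | k + 1 => fun g x => fderiv ℝ (iterLie F k g) x (F x)

/-- Phase space of a chain of `N` oscillators: `(p, q)`. -/
abbrev OscState (N : ℕ) : Type := (Fin N → ℝ) × (Fin N → ℝ)

/-- Position with 0-based natural index, `0` out of range. -/
def qc {N : ℕ} (x : OscState N) (i : ℕ) : ℝ := if h : i < N then x.2 ⟨i, h⟩ else 0

/-- Position with 0-based natural index, `0` out of range (for a configuration). -/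
def qe {N : ℕ} (q : Fin N → ℝ) (i : ℕ) : ℝ := if h : i < N then q ⟨i, h⟩ else 0

/-- Hamiltonian of the oscillator chain. -/
def HamO (N : ℕ) (U V : ℕ → ℝ → ℝ) (x : OscState N) : ℝ :=
  ∑ i : Fin N, (x.1 i) ^ 2 / 2 + ∑ i : Fin N, U i (x.2 i)
    + ∑ i ∈ Finset.range (N - 1), V i (qc x i - qc x (i + 1))

/-- Vector field of the oscillator chain with damping on the first oscillator. -/
def FOsc (N : ℕ) (U V : ℕ → ℝ → ℝ) (x : OscState N) : OscState N :=
  (fun i => -(if (i : ℕ) = 0 then x.1 i else 0) - deriv (U i) (x.2 i)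
      + (if (i : ℕ) = 0 then 0 else deriv (V ((i : ℕ) - 1)) (qc x ((i : ℕ) - 1) - x.2 i))
      - deriv (V i) (x.2 i - qc x ((i : ℕ) + 1)),
   fun i => x.1 i)

/-- The equilibrium system for the configuration `q`. -/
def IsEquilib (N : ℕ) (U V : ℕ → ℝ → ℝ) (q : Fin N → ℝ) : Prop :=
  ∀ i : Fin N,
    deriv (U i) (q i)
      - (if (i : ℕ) = 0 then 0 else deriv (V ((i : ℕ) - 1)) (qe q ((i : ℕ) - 1) - q i))
      + deriv (V i) (q i - qe q ((i : ℕ) + 1)) = 0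


namespace Osc

variable {E : Type*} [NormedAddCommGroup E] [NormedSpace ℝ E]

def LD (F : E → E) (g : E → ℝ) : E → ℝ := fun x => fderiv ℝ g x (F x)

lemma smooth_diff {f : E → ℝ} (h : ContDiff ℝ ∞ f) : Differentiable ℝ f :=
  h.differentiable (by simp)

lemma LD_eq {F : E → E} {g : E → ℝ} {L : E →L[ℝ] ℝ} {x : E} (h : HasFDerivAt g L x) :
    LD F g x = L (F x) := by
  unfold LD; rw [h.fderiv]

lemma LD_neg (F : E → E) (f : E → ℝ) (x : E) :
    LD F (fun y => -f y) x = -LD F f x := by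
  unfold LD; rw [fderiv_fun_neg]; rfl

lemma LD_add {F : E → E} {f g : E → ℝ} (hf : Differentiable ℝ f) (hg : Differentiable ℝ g)
    (x : E) : LD F (fun y => f y + g y) x = LD F f x + LD F g x := by
  unfold LD; rw [fderiv_fun_add (hf x) (hg x)]; rfl

lemma LD_sub {F : E → E} {f g : E → ℝ} (hf : Differentiable ℝ f) (hg : Differentiable ℝ g)
    (x : E) : LD F (fun y => f y - g y) x = LD F f x - LD F g x := by
  unfold LD; rw [fderiv_fun_sub (hf x) (hg x)]; rfl

lemma LD_const (F : E → E) (c : ℝ) (x : E) : LD F (fun _ => c) x = 0 := by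
  unfold LD; rw [fderiv_fun_const]; rfl

lemma LD_mul {F : E → E} {f g : E → ℝ} (hf : Differentiable ℝ f) (hg : Differentiable ℝ g)
    (x : E) : LD F (fun y => f y * g y) x = f x * LD F g x + g x * LD F f x := by
  unfold LD; rw [fderiv_fun_mul (hf x) (hg x)]; simp [mul_comm]

lemma iterLie_succ (F : E → E) (k : ℕ) (g : E → ℝ) :
    iterLie F (k + 1) g = LD F (iterLie F k g) := rfl

lemma iterLie_zero (F : E → E) (g : E → ℝ) : iterLie F 0 g = g := rfl

lemma iterLie_succ' (F : E → E) (k : ℕ) (g : E → ℝ) :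
    iterLie F (k + 1) g = iterLie F k (LD F g) := by
  induction k with
  | zero => rfl
  | succ k ih => rw [iterLie_succ, ih]; rfl

lemma contDiff_LD {F : E → E} (hF : ContDiff ℝ ∞ F) {g : E → ℝ} (hg : ContDiff ℝ ∞ g) :
    ContDiff ℝ ∞ (LD F g) :=
  (hg.fderiv_right (by exact_mod_cast le_top)).clm_apply hF

lemma contDiff_iterLie {F : E → E} (hF : ContDiff ℝ ∞ F) {g : E → ℝ} (hg : ContDiff ℝ ∞ g)
    (k : ℕ) : ContDiff ℝ ∞ (iterLie F k g) := by
  induction k with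
  | zero => exact hg
  | succ k ih => rw [iterLie_succ]; exact contDiff_LD hF ih

lemma iterLie_neg (F : E → E) (k : ℕ) (f : E → ℝ) :
    iterLie F k (fun y => -f y) = fun x => -iterLie F k f x := by
  induction k with
  | zero => rfl
  | succ k ih =>
      rw [iterLie_succ, iterLie_succ, ih]
      funext x
      exact LD_neg F _ x

lemma LD_const_mul {F : E → E} {f : E → ℝ} (hf : Differentiable ℝ f) (c : ℝ) (x : E) :
    LD F (fun y => c * f y) x = c * LD F f x := by
  unfold LD; rw [fderiv_const_mul (hf x)]; simp

lemma LD_sum {F : E → E} {ι : Type*} (s : Finset ι) {f : ι → E → ℝ}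
    (hf : ∀ i ∈ s, Differentiable ℝ (f i)) (x : E) :
    LD F (fun y => ∑ i ∈ s, f i y) x = ∑ i ∈ s, LD F (f i) x := by
  unfold LD
  rw [fderiv_fun_sum (fun i hi => (hf i hi) x)]
  simp

lemma dsm {f : ℝ → ℝ} (h : ContDiff ℝ ∞ f) : ContDiff ℝ ∞ (deriv f) :=
  (contDiff_infty_iff_deriv.mp h).2

section OscDefs

variable {N : ℕ}

def Pn (j : ℕ) (x : OscState N) : ℝ := if h : j < N then x.1 ⟨j, h⟩ else 0

def pL (j : ℕ) : OscState N →L[ℝ] ℝ :=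
  if h : j < N then (ContinuousLinearMap.proj (⟨j, h⟩ : Fin N)).comp
    (ContinuousLinearMap.fst ℝ (Fin N → ℝ) (Fin N → ℝ)) else 0

def qL (j : ℕ) : OscState N →L[ℝ] ℝ :=
  if h : j < N then (ContinuousLinearMap.proj (⟨j, h⟩ : Fin N)).comp
    (ContinuousLinearMap.snd ℝ (Fin N → ℝ) (Fin N → ℝ)) else 0

lemma pL_apply (j : ℕ) (x : OscState N) : pL j x = Pn j x := by
  unfold pL Pn; split <;> simp

lemma qL_apply (j : ℕ) (x : OscState N) : qL j x = qc x j := by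
  unfold qL qc; split <;> simp

lemma hasFDerivAt_Pn (j : ℕ) (x : OscState N) : HasFDerivAt (Pn (N := N) j) (pL j) x := by
  have h : Pn (N := N) j = fun x => pL j x := by funext y; rw [pL_apply]
  rw [h]; exact (pL j).hasFDerivAt

lemma hasFDerivAt_qc (j : ℕ) (x : OscState N) :
    HasFDerivAt (fun x : OscState N => qc x j) (qL j) x := by
  have h : (fun x : OscState N => qc x j) = fun x => qL j x := by funext y; rw [qL_apply]
  rw [h]; exact (qL j).hasFDerivAt

lemma contDiff_Pn (j : ℕ) : ContDiff ℝ ∞ (Pn (N := N) j) := by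
  have h : Pn (N := N) j = fun x => pL j x := by funext y; rw [pL_apply]
  rw [h]; exact (pL j).contDiff

lemma contDiff_qc (j : ℕ) : ContDiff ℝ ∞ (fun x : OscState N => qc x j) := by
  have h : (fun x : OscState N => qc x j) = fun x => qL j x := by funext y; rw [qL_apply]
  rw [h]; exact (qL j).contDiff

variable (U V : ℕ → ℝ → ℝ)

/-- the force on oscillator `j` (without damping) -/
def fn (j : ℕ) (x : OscState N) : ℝ :=
  -deriv (U j) (qc x j)
    + (if j = 0 then 0 else deriv (V (j - 1)) (qc x (j - 1) - qc x j))
    - deriv (V j) (qc x j - qc x (j + 1))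

structure Good (N : ℕ) (U V : ℕ → ℝ → ℝ) : Prop where
  hN : 2 ≤ N
  hU : ∀ i < N, ContDiff ℝ ∞ (U i)
  hV : ∀ i, ContDiff ℝ ∞ (V i)
  hVtop : ∀ i, N - 1 ≤ i → V i = fun _ => 0

variable {U V}

lemma Good.contDiff_fn (G : Good N U V) {j : ℕ} (hj : j < N) : ContDiff ℝ ∞ (fn U V (N := N) j) := by
  unfold fn
  apply ContDiff.sub
  apply ContDiff.add
  · exact ((dsm (G.hU j hj)).comp (contDiff_qc j)).neg
  · by_cases h0 : j = 0
    · simp only [if_pos h0]; exact contDiff_const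
    · simp only [if_neg h0]
      exact (dsm (G.hV (j-1))).comp ((contDiff_qc (j-1)).sub (contDiff_qc j))
  · exact (dsm (G.hV j)).comp ((contDiff_qc j).sub (contDiff_qc (j+1)))

lemma Pn_coe (i : Fin N) : (fun x : OscState N => x.1 i) = Pn (N := N) (i : ℕ) := by
  funext x; simp [Pn, i.isLt]

lemma Pn_coe' (i : Fin N) (y : OscState N) : y.1 i = Pn (i : ℕ) y := by
  simp [Pn, i.isLt]

lemma qc_coe (i : Fin N) (x : OscState N) : x.2 i = qc x (i : ℕ) := by
  simp [qc, i.isLt]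

lemma FOsc_fst (x : OscState N) (i : Fin N) :
    (FOsc N U V x).1 i = -(if (i : ℕ) = 0 then Pn (i : ℕ) x else 0) + fn U V (i : ℕ) x := by
  show -(if (i : ℕ) = 0 then x.1 i else 0) - deriv (U i) (x.2 i)
      + (if (i : ℕ) = 0 then 0 else deriv (V ((i : ℕ) - 1)) (qc x ((i : ℕ) - 1) - x.2 i))
      - deriv (V i) (x.2 i - qc x ((i : ℕ) + 1)) = _
  rw [qc_coe i x]
  unfold fn Pn
  simp only [i.isLt, dif_pos]
  ring_nf

lemma FOsc_snd (x : OscState N) (i : Fin N) : (FOsc N U V x).2 i = x.1 i := rfl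

lemma qL_F (j : ℕ) (x : OscState N) : qL j (FOsc N U V x) = Pn j x := by
  rw [qL_apply]; unfold qc Pn; split <;> rfl

lemma pL_F {j : ℕ} (hj : j < N) (x : OscState N) :
    pL j (FOsc N U V x) = -(if j = 0 then Pn j x else 0) + fn U V j x := by
  rw [pL_apply]
  show Pn j (FOsc N U V x) = _
  unfold Pn
  rw [dif_pos hj]
  exact FOsc_fst x ⟨j, hj⟩

lemma Good.contDiff_F (G : Good N U V) : ContDiff ℝ ∞ (FOsc N U V) := by
  apply ContDiff.prodMk
  · apply contDiff_pi.2
    intro i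
    have h1 : ContDiff ℝ ∞ (fun x : OscState N => -(if (i : ℕ) = 0 then Pn (i:ℕ) x else 0)) := by
      by_cases h0 : (i : ℕ) = 0
      · simp only [if_pos h0]; exact (contDiff_Pn _).neg
      · simp only [if_neg h0]; exact contDiff_const
    have h2 := h1.add (G.contDiff_fn i.isLt)
    have heq : (fun x : OscState N => -(if (i : ℕ) = 0 then Pn (i:ℕ) x else 0) + fn U V (i:ℕ) x)
        = (fun x : OscState N => (FOsc N U V x).1 i) := by
      funext x; exact (FOsc_fst x i).symm
    exact heq ▸ h2
  · apply contDiff_pi.2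
    intro i
    show ContDiff ℝ ∞ (fun x : OscState N => x.1 i)
    rw [Pn_coe]; exact contDiff_Pn _


lemma LD_Pn {j : ℕ} (hj : j < N) :
    LD (FOsc N U V) (Pn j) = fun x => -(if j = 0 then Pn j x else 0) + fn U V j x := by
  funext x
  rw [LD_eq (hasFDerivAt_Pn j x), pL_F hj]

lemma LD_qc (j : ℕ) :
    LD (FOsc N U V) (fun x => qc x j) = fun x => Pn j x := by
  funext x
  rw [LD_eq (hasFDerivAt_qc j x), qL_F]

lemma diff_comp_qc {h : ℝ → ℝ} (hh : Differentiable ℝ h) (j : ℕ) :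
    Differentiable ℝ (fun y : OscState N => h (qc y j)) := fun x =>
  ((hh _).hasDerivAt.comp_hasFDerivAt x (hasFDerivAt_qc j x)).differentiableAt

lemma diff_comp_rn {h : ℝ → ℝ} (hh : Differentiable ℝ h) (j k : ℕ) :
    Differentiable ℝ (fun y : OscState N => h (qc y j - qc y k)) := fun x =>
  ((hh _).hasDerivAt.comp_hasFDerivAt x
    ((hasFDerivAt_qc j x).sub (hasFDerivAt_qc k x))).differentiableAt

lemma LD_comp_qc {h : ℝ → ℝ} (hh : Differentiable ℝ h) (j : ℕ) (x : OscState N) :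
    LD (FOsc N U V) (fun y => h (qc y j)) x = deriv h (qc x j) * Pn j x := by
  have := LD_eq (F := FOsc N U V)
    ((hh _).hasDerivAt.comp_hasFDerivAt x (hasFDerivAt_qc j x))
  rw [show (fun y : OscState N => h (qc y j)) = h ∘ (fun y : OscState N => qc y j) from rfl, this]
  simp [qL_F]

lemma LD_comp_rn {h : ℝ → ℝ} (hh : Differentiable ℝ h) (j k : ℕ) (x : OscState N) :
    LD (FOsc N U V) (fun y => h (qc y j - qc y k)) x
      = deriv h (qc x j - qc x k) * (Pn j x - Pn k x) := by
  have := LD_eq (F := FOsc N U V)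
    ((hh _).hasDerivAt.comp_hasFDerivAt x ((hasFDerivAt_qc j x).sub (hasFDerivAt_qc k x)))
  rw [show (fun y : OscState N => h (qc y j - qc y k))
      = h ∘ ((fun y : OscState N => qc y j) - fun y : OscState N => qc y k) from rfl, this]
  simp [qL_F]

lemma Good.diff_dU (G : Good N U V) {j : ℕ} (hj : j < N) : Differentiable ℝ (deriv (U j)) :=
  smooth_diff (dsm (G.hU j hj))

lemma Good.diff_dV (G : Good N U V) (j : ℕ) : Differentiable ℝ (deriv (V j)) :=
  smooth_diff (dsm (G.hV j))

lemma Good.LD_fn (G : Good N U V) {j : ℕ} (hj : j < N) :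
    LD (FOsc N U V) (fn U V j) = fun x =>
      -(deriv (deriv (U j)) (qc x j) * Pn j x)
      + (if j = 0 then 0 else
          deriv (deriv (V (j - 1))) (qc x (j - 1) - qc x j) * (Pn (j - 1) x - Pn j x))
      - deriv (deriv (V j)) (qc x j - qc x (j + 1)) * (Pn j x - Pn (j + 1) x) := by
  funext x
  unfold fn
  have d1 : Differentiable ℝ (fun y : OscState N => -deriv (U j) (qc y j)) :=
    (diff_comp_qc (G.diff_dU hj) j).neg
  have d2 : Differentiable ℝ (fun y : OscState N =>
      if j = 0 then 0 else deriv (V (j - 1)) (qc y (j - 1) - qc y j)) := by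
    by_cases h0 : j = 0
    · simp only [if_pos h0]; exact differentiable_const 0
    · simp only [if_neg h0]; exact diff_comp_rn (G.diff_dV (j-1)) (j-1) j
  have d3 : Differentiable ℝ (fun y : OscState N => deriv (V j) (qc y j - qc y (j + 1))) :=
    diff_comp_rn (G.diff_dV j) j (j+1)
  rw [LD_sub (d1.fun_add d2) d3, LD_add d1 d2]
  have e1 : LD (FOsc N U V) (fun y : OscState N => -deriv (U j) (qc y j)) x
      = -(deriv (deriv (U j)) (qc x j) * Pn j x) := by
    rw [LD_neg, LD_comp_qc (G.diff_dU hj)]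
  have e3 := LD_comp_rn (N := N) (U := U) (V := V) (G.diff_dV j) j (j+1) x
  rw [e1, e3]
  congr 1
  congr 1
  by_cases h0 : j = 0
  · simp only [if_pos h0, LD_const]
  · simp only [if_neg h0]
    exact LD_comp_rn (G.diff_dV (j-1)) (j-1) j x


lemma ham_algebra (M : ℕ) (hM : 2 ≤ M) (p a b : ℕ → ℝ) (hb : b (M - 1) = 0) :
    (∑ j ∈ range M, p j * (-(if j = 0 then p j else 0)
        + (-a j + (if j = 0 then 0 else b (j - 1)) - b j)))
      + ∑ j ∈ range M, a j * p j
      + ∑ j ∈ range (M - 1), b j * (p j - p (j + 1)) = -(p 0 * p 0) := by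
  have hM1 : M - 1 + 1 = M := by omega
  have h1 : ∀ j, p j * (-(if j = 0 then p j else 0)
        + (-a j + (if j = 0 then 0 else b (j - 1)) - b j))
      = (if j = 0 then -(p j * p j) else 0) + (-(a j * p j))
        + (if j = 0 then 0 else p j * b (j - 1)) + (-(p j * b j)) := by
    intro j; split_ifs <;> ring
  rw [Finset.sum_congr rfl (fun j _ => h1 j)]
  simp only [Finset.sum_add_distrib]
  have e1 : ∑ j ∈ range M, (if j = 0 then -(p j * p j) else 0) = -(p 0 * p 0) := by
    rw [Finset.sum_ite_eq' (range M) 0 (fun j => -(p j * p j))]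
    simp [show 0 < M by omega]
  have e2 : ∑ j ∈ range M, -(a j * p j) = -∑ j ∈ range M, a j * p j := by
    rw [Finset.sum_neg_distrib]
  have e3 : ∑ j ∈ range M, (if j = 0 then 0 else p j * b (j - 1))
      = ∑ j ∈ range (M - 1), p (j + 1) * b j := by
    rw [← hM1, Finset.sum_range_succ' (fun j => if j = 0 then 0 else p j * b (j - 1)) (M - 1)]
    simp
  have e4 : ∑ j ∈ range M, -(p j * b j) = -∑ j ∈ range (M - 1), p j * b j := by
    have h5 : ∑ j ∈ range M, p j * b j = ∑ j ∈ range (M - 1), p j * b j := by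
      conv_lhs => rw [← hM1]
      rw [Finset.sum_range_succ, hb, mul_zero, add_zero]
    rw [Finset.sum_neg_distrib, h5]
  have e5 : ∑ j ∈ range (M - 1), b j * (p j - p (j + 1))
      = (∑ j ∈ range (M - 1), p j * b j) - ∑ j ∈ range (M - 1), p (j + 1) * b j := by
    rw [← Finset.sum_sub_distrib]
    exact Finset.sum_congr rfl fun j _ => by ring
  rw [e1, e2, e3, e4, e5]
  ring

lemma fn_eq (j : ℕ) (x : OscState N) :
    fn U V j x = -deriv (U j) (qc x j)
      + (if j = 0 then 0 else deriv (V (j - 1)) (qc x (j - 1) - qc x j))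
      - deriv (V j) (qc x j - qc x (j + 1)) := rfl

lemma Good.LD_H (G : Good N U V) :
    LD (FOsc N U V) (HamO N U V) = fun x => -(Pn 0 x * Pn 0 x) := by
  funext x
  have hH : HamO N U V = fun y => ((∑ i : Fin N, (Pn (i : ℕ) y) ^ 2 / 2)
      + (∑ i : Fin N, U i (qc y (i : ℕ))))
      + (∑ i ∈ range (N - 1), V i (qc y i - qc y (i + 1))) := by
    funext y; unfold HamO
    congr 1
    congr 1
    · exact Finset.sum_congr rfl fun i _ => by rw [Pn_coe' i y]
    · exact Finset.sum_congr rfl fun i _ => by rw [qc_coe i y]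
  have dif1 : ∀ i : Fin N, Differentiable ℝ (fun y : OscState N => (Pn (i : ℕ) y) ^ 2 / 2) :=
    fun i => smooth_diff (((contDiff_Pn _).pow 2).div_const 2)
  have dif2 : ∀ i : Fin N, Differentiable ℝ (fun y : OscState N => U i (qc y (i : ℕ))) :=
    fun i => diff_comp_qc (smooth_diff (G.hU i i.isLt)) _
  have dif3 : ∀ i ∈ range (N - 1), Differentiable ℝ
      (fun y : OscState N => V i (qc y i - qc y (i + 1))) :=
    fun i _ => diff_comp_rn (smooth_diff (G.hV i)) _ _
  have D1 : Differentiable ℝ (fun y : OscState N => ∑ i : Fin N, (Pn (i : ℕ) y) ^ 2 / 2) :=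
    Differentiable.fun_sum fun i _ => dif1 i
  have D2 : Differentiable ℝ (fun y : OscState N => ∑ i : Fin N, U i (qc y (i : ℕ))) :=
    Differentiable.fun_sum fun i _ => dif2 i
  have D3 : Differentiable ℝ (fun y : OscState N => ∑ i ∈ range (N - 1), V i (qc y i - qc y (i + 1))) :=
    Differentiable.fun_sum dif3
  rw [hH, LD_add (D1.fun_add D2) D3, LD_add D1 D2, LD_sum Finset.univ (fun i _ => dif1 i),
    LD_sum Finset.univ (fun i _ => dif2 i), LD_sum (range (N - 1)) dif3]
  have e1 : ∀ i : Fin N, LD (FOsc N U V) (fun y => (Pn (i : ℕ) y) ^ 2 / 2) x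
      = Pn (i : ℕ) x * (-(if (i : ℕ) = 0 then Pn (i : ℕ) x else 0) + fn U V (i : ℕ) x) := by
    intro i
    have hsq : HasDerivAt (fun t : ℝ => t ^ 2 / 2) (Pn (i : ℕ) x) (Pn (i : ℕ) x) := by
      simpa using (hasDerivAt_pow 2 (Pn (N := N) (i : ℕ) x)).div_const 2
    have h := LD_eq (F := FOsc N U V) (hsq.comp_hasFDerivAt x (hasFDerivAt_Pn (i : ℕ) x))
    rw [show (fun y : OscState N => (Pn (i : ℕ) y) ^ 2 / 2)
        = (fun t : ℝ => t ^ 2 / 2) ∘ Pn (i : ℕ) from rfl, h]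
    simp [pL_F i.isLt]
  have e2 : ∀ i : Fin N, LD (FOsc N U V) (fun y => U i (qc y (i : ℕ))) x
      = deriv (U i) (qc x (i : ℕ)) * Pn (i : ℕ) x :=
    fun i => LD_comp_qc (smooth_diff (G.hU i i.isLt)) _ x
  have e3 : ∀ i ∈ range (N - 1), LD (FOsc N U V) (fun y => V i (qc y i - qc y (i + 1))) x
      = deriv (V i) (qc x i - qc x (i + 1)) * (Pn i x - Pn (i + 1) x) :=
    fun i _ => LD_comp_rn (smooth_diff (G.hV i)) _ _ x
  rw [Finset.sum_congr rfl (fun i _ => e1 i), Finset.sum_congr rfl (fun i _ => e2 i),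
    Finset.sum_congr rfl e3]
  rw [Fin.sum_univ_eq_sum_range
    (fun j => Pn j x * (-(if j = 0 then Pn j x else 0) + fn U V j x)) N]
  rw [Fin.sum_univ_eq_sum_range (fun j => deriv (U j) (qc x j) * Pn j x) N]
  have hb : deriv (V (N - 1)) (qc x (N - 1) - qc x (N - 1 + 1)) = 0 := by
    rw [G.hVtop (N - 1) le_rfl]
    simp
  have := ham_algebra N G.hN (fun j => Pn j x) (fun j => deriv (U j) (qc x j))
    (fun j => deriv (V j) (qc x j - qc x (j + 1))) hb
  have hconv : ∀ j : ℕ, (if j = 0 then (0:ℝ)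
        else deriv (V (j - 1)) (qc x (j - 1) - qc x (j - 1 + 1)))
      = (if j = 0 then 0 else deriv (V (j - 1)) (qc x (j - 1) - qc x j)) := by
    intro j
    by_cases h0 : j = 0
    · simp [h0]
    · have hj : j - 1 + 1 = j := by omega
      simp only [if_neg h0, hj]
  simpa [fn_eq, hconv] using this


variable (U V)

/-- generators: even ↦ momentum, odd ↦ force -/
def gg (m : ℕ) : OscState N → ℝ := if m % 2 = 0 then Pn (m / 2) else fn U V (m / 2)

def cc (j : ℕ) : OscState N → ℝ :=
  fun x => ∏ i ∈ range j, deriv (deriv (V i)) (qc x i - qc x (i + 1))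

/-- membership in the "ideal" generated by the first `s` generators, with smooth
coefficients -/
def Van (s : ℕ) (R : OscState N → ℝ) : Prop :=
  ∃ h : ℕ → OscState N → ℝ, (∀ m, ContDiff ℝ ∞ (h m))
    ∧ R = fun x => ∑ m ∈ range s, h m x * gg U V m x

variable {U V}

lemma gg_even (j : ℕ) : gg U V (N := N) (2 * j) = Pn j := by
  unfold gg
  simp [Nat.mul_mod_right, Nat.mul_div_cancel_left j (show 0 < 2 by norm_num)]

lemma gg_odd (j : ℕ) : gg U V (N := N) (2 * j + 1) = fn U V j := by
  unfold gg
  have h1 : (2 * j + 1) % 2 = 1 := by omega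
  have h2 : (2 * j + 1) / 2 = j := by omega
  simp [h1, h2]

lemma Good.contDiff_gg (G : Good N U V) {m : ℕ} (hm : m < 2 * N) :
    ContDiff ℝ ∞ (gg U V (N := N) m) := by
  unfold gg
  split
  · exact contDiff_Pn _
  · exact G.contDiff_fn (by omega)

lemma Good.contDiff_cc (G : Good N U V) (j : ℕ) : ContDiff ℝ ∞ (cc V (N := N) j) := by
  induction j with
  | zero => unfold cc; simpa using contDiff_const
  | succ j ih =>
    have h : cc V (N := N) (j + 1) = fun x => cc V (N := N) j x
        * deriv (deriv (V j)) (qc x j - qc x (j + 1)) := by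
      funext x; unfold cc; rw [Finset.prod_range_succ]
    rw [h]
    exact ih.mul ((dsm (dsm (G.hV j))).comp ((contDiff_qc j).sub (contDiff_qc (j + 1))))

lemma Van_congr {s : ℕ} {R R' : OscState N → ℝ} (h : R = R') (hR : Van U V s R) :
    Van U V s R' := h ▸ hR

lemma Van_zero (s : ℕ) : Van U V (N := N) s (fun _ => 0) :=
  ⟨fun _ _ => 0, fun _ => contDiff_const, by funext x; simp⟩

lemma Van_add {s : ℕ} {R R' : OscState N → ℝ} (hR : Van U V s R) (hR' : Van U V s R') :
    Van U V s (fun x => R x + R' x) := by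
  obtain ⟨h1, hs1, rfl⟩ := hR
  obtain ⟨h2, hs2, rfl⟩ := hR'
  refine ⟨fun m x => h1 m x + h2 m x, fun m => (hs1 m).add (hs2 m), ?_⟩
  funext x
  rw [← Finset.sum_add_distrib]
  exact Finset.sum_congr rfl fun m _ => by ring

lemma Van_smul {s : ℕ} {c R : OscState N → ℝ} (hc : ContDiff ℝ ∞ c) (hR : Van U V s R) :
    Van U V s (fun x => c x * R x) := by
  obtain ⟨h1, hs1, rfl⟩ := hR
  refine ⟨fun m x => c x * h1 m x, fun m => hc.mul (hs1 m), ?_⟩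
  funext x
  rw [Finset.mul_sum]
  exact Finset.sum_congr rfl fun m _ => by ring

lemma Van_gen {s i : ℕ} (hi : i < s) {c : OscState N → ℝ} (hc : ContDiff ℝ ∞ c) :
    Van U V s (fun x => c x * gg U V i x) := by
  refine ⟨fun m x => if m = i then c x else 0, ?_, ?_⟩
  · intro m
    by_cases h : m = i
    · simpa [h] using hc
    · simpa [h] using contDiff_const (c := (0:ℝ))
  · funext x
    rw [Finset.sum_eq_single i]
    · simp
    · intro b _ hb; simp [hb]
    · intro hnot; exact absurd (Finset.mem_range.2 hi) hnot

lemma Van_mono {s t : ℕ} (hst : s ≤ t) {R : OscState N → ℝ} (hR : Van U V (N := N) s R) :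
    Van U V t R := by
  obtain ⟨h1, hs1, rfl⟩ := hR
  refine ⟨fun m x => if m < s then h1 m x else 0, ?_, ?_⟩
  · intro m
    by_cases h : m < s
    · simpa [h] using hs1 m
    · simpa [h] using contDiff_const (c := (0:ℝ))
  · funext x
    rw [← Finset.sum_subset (Finset.range_subset_range.2 hst)
      (fun m _ hm => by simp [show ¬ m < s from fun h => hm (Finset.mem_range.2 h)])]
    exact Finset.sum_congr rfl fun m hm => by simp [Finset.mem_range.1 hm]

lemma Van_sum {s : ℕ} {ι : Type*} (t : Finset ι) {f : ι → OscState N → ℝ}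
    (hf : ∀ i ∈ t, Van U V s (f i)) :
    Van U V s (fun x => ∑ i ∈ t, f i x) := by
  classical
  induction t using Finset.induction_on with
  | empty => simpa using Van_zero s
  | insert a t' hnot ih =>
    have h1 : Van U V s (f a) := hf a (Finset.mem_insert_self a t')
    have h2 := ih fun i hi => hf i (Finset.mem_insert_of_mem hi)
    have := Van_add h1 h2
    refine Van_congr ?_ this
    funext x
    rw [Finset.sum_insert hnot]

lemma Good.Van_smooth (G : Good N U V) {s : ℕ} (hs : s ≤ 2 * N) {R : OscState N → ℝ}
    (hR : Van U V s R) : ContDiff ℝ ∞ R := by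
  obtain ⟨h1, hs1, rfl⟩ := hR
  apply ContDiff.sum
  intro m hm
  exact (hs1 m).mul (G.contDiff_gg (by have := Finset.mem_range.1 hm; omega))


lemma Good.LD_gg (G : Good N U V) {m : ℕ} (hm : m < 2 * N - 1) :
    Van U V (m + 2) (LD (FOsc N U V) (gg U V m)) := by
  rcases Nat.even_or_odd m with ⟨j, hj⟩ | ⟨j, hj⟩
  · -- m = 2 j
    have hjN : j < N := by omega
    have h2j : m = 2 * j := by omega
    subst h2j
    rw [gg_even, LD_Pn hjN]
    have heq : (fun x : OscState N => -(if j = 0 then Pn j x else 0) + fn U V j x)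
        = fun x => ((fun y : OscState N => if j = 0 then (-1:ℝ) else 0) x * gg U V (2*j) x)
          + ((fun _ : OscState N => (1:ℝ)) x * gg U V (2*j+1) x) := by
      funext x
      rw [gg_even, gg_odd]
      split_ifs <;> ring
    refine Van_congr heq.symm ?_
    exact Van_add (Van_gen (by omega) (by by_cases h0 : j = 0 <;> simp [h0] <;>
        exact contDiff_const)) (Van_gen (by omega) contDiff_const)
  · -- m = 2 j + 1
    have hjN : j + 1 < N := by omega
    have h2j : m = 2 * j + 1 := by omega
    subst h2j
    rw [gg_odd, G.LD_fn (by omega : j < N)]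
    set c2 : OscState N → ℝ :=
      fun x => if j = 0 then 0 else deriv (deriv (V (j-1))) (qc x (j-1) - qc x j) with hc2def
    have sm_ddU : ContDiff ℝ ∞ (fun x : OscState N => deriv (deriv (U j)) (qc x j)) :=
      (dsm (dsm (G.hU j (by omega)))).comp (contDiff_qc j)
    have sm_ddVj : ContDiff ℝ ∞
        (fun x : OscState N => deriv (deriv (V j)) (qc x j - qc x (j+1))) :=
      (dsm (dsm (G.hV j))).comp ((contDiff_qc j).sub (contDiff_qc (j+1)))
    have sm_c2 : ContDiff ℝ ∞ c2 := by
      rw [hc2def]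
      by_cases h0 : j = 0
      · simpa [h0] using contDiff_const (c := (0:ℝ))
      · simp only [if_neg h0]
        exact (dsm (dsm (G.hV (j-1)))).comp ((contDiff_qc (j-1)).sub (contDiff_qc j))
    have heq : (fun x : OscState N =>
          -(deriv (deriv (U j)) (qc x j) * Pn j x)
          + (if j = 0 then 0 else
              deriv (deriv (V (j - 1))) (qc x (j - 1) - qc x j) * (Pn (j - 1) x - Pn j x))
          - deriv (deriv (V j)) (qc x j - qc x (j + 1)) * (Pn j x - Pn (j + 1) x))
        = fun x =>
          ((fun y => -(deriv (deriv (U j)) (qc y j)) - c2 y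
              - deriv (deriv (V j)) (qc y j - qc y (j+1))) x * gg U V (2*j) x)
          + (c2 x * gg U V (2*(j-1)) x)
          + ((fun y => deriv (deriv (V j)) (qc y j - qc y (j+1))) x * gg U V (2*(j+1)) x) := by
      funext x
      rw [gg_even, gg_even, gg_even]
      by_cases h0 : j = 0
      · subst h0; simp [hc2def]; ring
      · simp only [hc2def, if_neg h0]; ring
    refine Van_congr heq.symm ?_
    refine Van_add (Van_add (Van_gen (by omega) ?_) (Van_gen (by omega) sm_c2))
      (Van_gen (by omega) sm_ddVj)
    exact (sm_ddU.neg.sub sm_c2).sub sm_ddVj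

lemma Good.Van_LD (G : Good N U V) {s : ℕ} {R : OscState N → ℝ} (hs : s ≤ 2 * N - 1)
    (hR : Van U V s R) : Van U V (s + 1) (LD (FOsc N U V) R) := by
  obtain ⟨h1, hs1, rfl⟩ := hR
  have hgg : ∀ m, m ∈ range s → ContDiff ℝ ∞ (gg U V (N := N) m) :=
    fun m hm => G.contDiff_gg (by have := Finset.mem_range.1 hm; omega)
  have hLD : LD (FOsc N U V) (fun x => ∑ m ∈ range s, h1 m x * gg U V m x)
      = fun x => ∑ m ∈ range s,
          (h1 m x * LD (FOsc N U V) (gg U V m) x + LD (FOsc N U V) (h1 m) x * gg U V m x) := by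
    funext x
    rw [LD_sum (range s) (fun m hm => smooth_diff ((hs1 m).mul (hgg m hm))) x]
    refine Finset.sum_congr rfl fun m hm => ?_
    rw [LD_mul (smooth_diff (hs1 m)) (smooth_diff (hgg m hm))]
    ring
  refine Van_congr hLD.symm ?_
  apply Van_sum
  intro m hm
  have hmlt := Finset.mem_range.1 hm
  apply Van_add
  · exact Van_smul (hs1 m) (Van_mono (by omega) (G.LD_gg (by omega)))
  · exact Van_gen (by omega) (contDiff_LD G.contDiff_F (hs1 m))

lemma cc_succ (j : ℕ) (x : OscState N) :
    cc V (j + 1) x = cc V j x * deriv (deriv (V j)) (qc x j - qc x (j + 1)) := by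
  unfold cc; rw [Finset.prod_range_succ]

lemma Good.key_odd (G : Good N U V) {j : ℕ} (hj1 : j + 1 < N) :
    Van U V (2*j + 2) (fun x : OscState N =>
      cc V j x * LD (FOsc N U V) (fn U V j) x - cc V (j+1) x * Pn (j+1) x) := by
  rw [G.LD_fn (by omega : j < N)]
  set c2 : OscState N → ℝ :=
    fun x => if j = 0 then 0 else deriv (deriv (V (j-1))) (qc x (j-1) - qc x j) with hc2def
  have sm_ddU : ContDiff ℝ ∞ (fun x : OscState N => deriv (deriv (U j)) (qc x j)) :=
    (dsm (dsm (G.hU j (by omega)))).comp (contDiff_qc j)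
  have sm_ddVj : ContDiff ℝ ∞
      (fun x : OscState N => deriv (deriv (V j)) (qc x j - qc x (j+1))) :=
    (dsm (dsm (G.hV j))).comp ((contDiff_qc j).sub (contDiff_qc (j+1)))
  have sm_c2 : ContDiff ℝ ∞ c2 := by
    rw [hc2def]
    by_cases h0 : j = 0
    · simpa [h0] using contDiff_const (c := (0:ℝ))
    · simp only [if_neg h0]
      exact (dsm (dsm (G.hV (j-1)))).comp ((contDiff_qc (j-1)).sub (contDiff_qc j))
  have heq : (fun x : OscState N =>
        cc V j x * ((-(deriv (deriv (U j)) (qc x j) * Pn j x)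
          + (if j = 0 then 0 else
              deriv (deriv (V (j - 1))) (qc x (j - 1) - qc x j) * (Pn (j - 1) x - Pn j x))
          - deriv (deriv (V j)) (qc x j - qc x (j + 1)) * (Pn j x - Pn (j + 1) x)))
        - cc V (j+1) x * Pn (j+1) x)
      = fun x =>
        ((fun y => cc V j y * (-(deriv (deriv (U j)) (qc y j)) - c2 y
            - deriv (deriv (V j)) (qc y j - qc y (j+1)))) x * gg U V (2*j) x)
        + ((fun y => cc V j y * c2 y) x * gg U V (2*(j-1)) x) := by
    funext x
    rw [gg_even, gg_even, cc_succ]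
    by_cases h0 : j = 0
    · subst h0; simp [hc2def]; ring
    · simp only [hc2def, if_neg h0]; ring
  refine Van_congr heq.symm ?_
  refine Van_add (Van_gen (by omega) ?_) (Van_gen (by omega) ((G.contDiff_cc j).mul sm_c2))
  exact (G.contDiff_cc j).mul ((sm_ddU.neg.sub sm_c2).sub sm_ddVj)


lemma Good.struct (G : Good N U V) :
    ∀ m, m ≤ 2 * N - 1 → ∃ R, Van U V m R ∧
      iterLie (FOsc N U V) m (Pn 0) = fun x => cc V (m / 2) x * gg U V m x + R x := by
  intro m
  induction m with
  | zero =>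
    intro _
    refine ⟨fun _ => 0, Van_zero 0, ?_⟩
    funext x
    show Pn 0 x = cc V 0 x * gg U V 0 x + 0
    have h1 : cc V (N := N) 0 x = 1 := by unfold cc; simp
    have h2 : gg U V (N := N) 0 x = Pn 0 x := by unfold gg; simp
    rw [h1, h2]; ring
  | succ m ih =>
    intro hm1
    obtain ⟨R, hR, hbm⟩ := ih (by omega)
    have hgsm : ContDiff ℝ ∞ (gg U V (N := N) m) := G.contDiff_gg (by omega)
    have hRsm : ContDiff ℝ ∞ R := G.Van_smooth (by omega) hR
    have hcsm : ContDiff ℝ ∞ (cc V (N := N) (m / 2)) := G.contDiff_cc _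
    have hLD : iterLie (FOsc N U V) (m+1) (Pn 0)
        = fun x => (cc V (m/2) x * LD (FOsc N U V) (gg U V m) x
            + gg U V m x * LD (FOsc N U V) (cc V (m/2)) x) + LD (FOsc N U V) R x := by
      rw [iterLie_succ, hbm]
      funext x
      rw [LD_add (smooth_diff (hcsm.mul hgsm)) (smooth_diff hRsm),
        LD_mul (smooth_diff hcsm) (smooth_diff hgsm)]
    have hVanR : Van U V (m+1) (LD (FOsc N U V) R) := G.Van_LD (by omega) hR
    have hVanC : Van U V (m+1)
        (fun x => gg U V m x * LD (FOsc N U V) (cc V (m/2)) x) := by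
      have := Van_gen (U := U) (V := V) (show m < m + 1 by omega)
        (contDiff_LD G.contDiff_F hcsm)
      exact Van_congr (by funext x; ring) this
    rcases Nat.even_or_odd m with ⟨j, hj⟩ | ⟨j, hj⟩
    · -- m = 2j even
      have hjm : m = 2 * j := by omega
      subst hjm
      have hjN : j < N := by omega
      have hd1 : (2 * j) / 2 = j := by omega
      have hd2 : (2 * j + 1) / 2 = j := by omega
      refine ⟨fun x => (if j = 0 then (-1:ℝ) else 0) * cc V j x * gg U V (2*j) x
        + gg U V (2*j) x * LD (FOsc N U V) (cc V ((2*j)/2)) x + LD (FOsc N U V) R x, ?_, ?_⟩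
      · refine Van_add (Van_add ?_ hVanC) hVanR
        refine Van_gen (by omega) ?_
        exact (contDiff_const.mul (G.contDiff_cc j))
      · rw [hLD]
        funext x
        rw [hd1, hd2, gg_even, gg_odd, LD_Pn (U := U) (V := V) hjN]
        split_ifs <;> ring
    · -- m = 2j+1 odd
      have hjm : m = 2 * j + 1 := by omega
      subst hjm
      have hjN : j + 1 < N := by omega
      have hd1 : (2 * j + 1) / 2 = j := by omega
      have hd2 : (2 * j + 1 + 1) / 2 = j + 1 := by omega
      refine ⟨fun x => (cc V j x * LD (FOsc N U V) (fn U V j) x - cc V (j+1) x * Pn (j+1) x)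
        + gg U V (2*j+1) x * LD (FOsc N U V) (cc V ((2*j+1)/2)) x
        + LD (FOsc N U V) R x, ?_, ?_⟩
      · exact Van_add (Van_add (Van_mono (by omega) (G.key_odd hjN)) hVanC) hVanR
      · rw [hLD]
        funext x
        rw [hd1, hd2]
        have hgm1 : gg U V (N := N) (2*j+1+1) = Pn (j+1) := by
          have : 2*j+1+1 = 2*(j+1) := by omega
          rw [this, gg_even]
        rw [hgm1, gg_odd]
        ring


lemma binom_step (k : ℕ) (b : ℕ → ℝ) :
    ∑ j ∈ range (k+1), (k.choose j : ℝ) * (b j * b (k-j+1) + b (k-j) * b (j+1))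
      = ∑ j ∈ range (k+2), ((k+1).choose j : ℝ) * (b j * b (k+1-j)) := by
  have hf : ∀ j ∈ range (k+1), (k.choose j : ℝ) * (b j * b (k-j+1) + b (k-j) * b (j+1))
      = (k.choose j : ℝ) * (b j * b (k+1-j)) + (k.choose j : ℝ) * (b (j+1) * b (k-j)) := by
    intro j hj
    have e : k - j + 1 = k + 1 - j := by have := Finset.mem_range.1 hj; omega
    rw [e]; ring
  rw [Finset.sum_congr rfl hf, Finset.sum_add_distrib]
  rw [Finset.sum_range_succ' (fun j => (((k+1).choose j : ℕ) : ℝ) * (b j * b (k+1-j))) (k+1)]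
  have h1 : ∀ j ∈ range (k+1), (((k+1).choose (j+1) : ℕ) : ℝ) * (b (j+1) * b (k+1-(j+1)))
      = (k.choose j : ℝ) * (b (j+1) * b (k-j)) + (k.choose (j+1) : ℝ) * (b (j+1) * b (k-j)) := by
    intro j hj
    have e : k+1-(j+1) = k - j := by omega
    rw [e, Nat.choose_succ_succ]
    push_cast; ring
  rw [Finset.sum_congr rfl h1, Finset.sum_add_distrib]
  have h2 : ∑ j ∈ range (k+1), (k.choose j : ℝ) * (b j * b (k+1-j))
      = (∑ j ∈ range (k+1), (k.choose (j+1) : ℝ) * (b (j+1) * b (k-j))) + b 0 * b (k+1) := by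
    rw [Finset.sum_range_succ' (fun j => (k.choose j : ℝ) * (b j * b (k+1-j))) k]
    rw [Finset.sum_range_succ (fun j => (k.choose (j+1) : ℝ) * (b (j+1) * b (k-j))) k]
    have e3 : ∀ j ∈ range k, (k.choose (j+1) : ℝ) * (b (j+1) * b (k+1-(j+1)))
        = (k.choose (j+1) : ℝ) * (b (j+1) * b (k-j)) := by
      intro j hj
      have e : k+1-(j+1) = k-j := by omega
      rw [e]
    rw [Finset.sum_congr rfl e3]
    simp [Nat.choose_succ_self]
  rw [h2]
  simp
  ring

lemma Good.sq_expand (G : Good N U V) : ∀ k : ℕ,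
    iterLie (FOsc N U V) k (fun y : OscState N => Pn 0 y * Pn 0 y)
      = fun x => ∑ j ∈ range (k+1), (k.choose j : ℝ)
          * (iterLie (FOsc N U V) j (Pn 0) x * iterLie (FOsc N U V) (k-j) (Pn 0) x) := by
  have hbsm : ∀ m, ContDiff ℝ ∞ (iterLie (FOsc N U V) m (Pn (N := N) 0)) :=
    fun m => contDiff_iterLie G.contDiff_F (contDiff_Pn 0) m
  intro k
  induction k with
  | zero =>
    funext x
    show Pn 0 x * Pn 0 x = _
    simp [iterLie_zero]
  | succ k ih =>
    rw [iterLie_succ, ih]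
    funext x
    have hd : ∀ j ∈ range (k+1), Differentiable ℝ (fun y : OscState N =>
        (k.choose j : ℝ) * (iterLie (FOsc N U V) j (Pn 0) y
          * iterLie (FOsc N U V) (k-j) (Pn 0) y)) :=
      fun j _ => smooth_diff (contDiff_const.mul ((hbsm j).mul (hbsm (k-j))))
    rw [LD_sum (range (k+1)) hd x]
    have hterm : ∀ j ∈ range (k+1), LD (FOsc N U V) (fun y : OscState N =>
        (k.choose j : ℝ) * (iterLie (FOsc N U V) j (Pn 0) y
          * iterLie (FOsc N U V) (k-j) (Pn 0) y)) x
        = (k.choose j : ℝ) * (iterLie (FOsc N U V) j (Pn 0) x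
            * iterLie (FOsc N U V) (k-j+1) (Pn 0) x
          + iterLie (FOsc N U V) (k-j) (Pn 0) x * iterLie (FOsc N U V) (j+1) (Pn 0) x) := by
      intro j _
      rw [LD_const_mul (smooth_diff ((hbsm j).mul (hbsm (k-j)))),
        LD_mul (smooth_diff (hbsm j)) (smooth_diff (hbsm (k-j)))]
      rfl
    rw [Finset.sum_congr rfl hterm]
    exact binom_step k (fun m => iterLie (FOsc N U V) m (Pn 0) x)

lemma Good.iter_H (G : Good N U V) (k : ℕ) :
    iterLie (FOsc N U V) (k+1) (HamO N U V)
      = fun x => -(iterLie (FOsc N U V) k (fun y : OscState N => Pn 0 y * Pn 0 y) x) := by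
  rw [iterLie_succ', G.LD_H]
  exact iterLie_neg (FOsc N U V) k (fun y : OscState N => Pn 0 y * Pn 0 y)

lemma Good.bb_vanish (G : Good N U V) (x : OscState N)
    (hk : ∀ k, 1 ≤ k → k ≤ 4*N-1 → iterLie (FOsc N U V) k (HamO N U V) x = 0) :
    ∀ m, m ≤ 2*N-1 → iterLie (FOsc N U V) m (Pn 0) x = 0 := by
  intro m
  induction m using Nat.strong_induction_on with
  | _ m ih =>
  intro hm
  have hN2 := G.hN
  have h2 : iterLie (FOsc N U V) (2*m) (fun y : OscState N => Pn 0 y * Pn 0 y) x = 0 := by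
    have h3 := congrFun (G.iter_H (2*m)) x
    rw [hk (2*m+1) (by omega) (by omega)] at h3
    linarith
  rw [congrFun (G.sq_expand (2*m)) x] at h2
  have h4 : ∑ j ∈ range (2*m+1), ((2*m).choose j : ℝ)
      * (iterLie (FOsc N U V) j (Pn 0) x * iterLie (FOsc N U V) (2*m-j) (Pn 0) x)
      = ((2*m).choose m : ℝ)
        * (iterLie (FOsc N U V) m (Pn 0) x * iterLie (FOsc N U V) (2*m-m) (Pn 0) x) := by
    apply Finset.sum_eq_single
    · intro j hj hne
      rcases lt_or_gt_of_ne hne with h | h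
      · rw [ih j h (by omega)]; ring
      · have hj2 : 2*m - j < m := by have := Finset.mem_range.1 hj; omega
        rw [ih (2*m-j) hj2 (by omega)]; ring
    · intro hnot
      exact absurd (Finset.mem_range.2 (by omega)) hnot
  rw [h4] at h2
  have h5 : (2*m - m) = m := by omega
  rw [h5] at h2
  have hc : ((2*m).choose m : ℝ) ≠ 0 := by
    have := Nat.choose_pos (show m ≤ 2*m by omega)
    positivity
  have h6 : iterLie (FOsc N U V) m (Pn 0) x * iterLie (FOsc N U V) m (Pn 0) x = 0 :=
    (mul_eq_zero.mp h2).resolve_left hc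
  exact mul_self_eq_zero.mp h6

lemma Good.gg_vanish (G : Good N U V)
    (hV'' : ∀ i < N - 1, ∀ t : ℝ, 0 < deriv (deriv (V i)) t) (x : OscState N)
    (hb : ∀ m, m ≤ 2*N-1 → iterLie (FOsc N U V) m (Pn 0) x = 0) :
    ∀ m, m ≤ 2*N-1 → gg U V m x = 0 := by
  intro m
  induction m using Nat.strong_induction_on with
  | _ m ih =>
  intro hm
  obtain ⟨R, hR, hbeq⟩ := G.struct m hm
  have hx : cc V (m/2) x * gg U V m x + R x = 0 :=
    (congrFun hbeq x).symm.trans (hb m hm)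
  obtain ⟨h1, hs1, hReq⟩ := hR
  have hR0 : R x = 0 := by
    rw [congrFun hReq x]
    apply Finset.sum_eq_zero
    intro i hi
    rw [ih i (Finset.mem_range.1 hi) (by have := Finset.mem_range.1 hi; omega)]
    ring
  have hcc : cc V (m/2) x ≠ 0 := by
    have hpos : 0 < cc V (N := N) (m/2) x := by
      unfold cc
      apply Finset.prod_pos
      intro i hi
      exact hV'' i (by have := Finset.mem_range.1 hi; omega) _
    exact ne_of_gt hpos
  have : cc V (m/2) x * gg U V m x = 0 := by linarith
  exact (mul_eq_zero.mp this).resolve_left hcc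


lemma eq_algebra (M : ℕ) (hM : 2 ≤ M) (q a b : ℕ → ℝ) (hb : b (M - 1) = 0) :
    ∑ j ∈ range M, q j * (-a j + (if j = 0 then 0 else b (j - 1)) - b j)
      = -((∑ j ∈ range M, q j * a j) + ∑ j ∈ range (M - 1), (q j - q (j + 1)) * b j) := by
  have hM1 : M - 1 + 1 = M := by omega
  have h1 : ∀ j, q j * (-a j + (if j = 0 then 0 else b (j - 1)) - b j)
      = (-(q j * a j)) + (if j = 0 then 0 else q j * b (j - 1)) + (-(q j * b j)) := by
    intro j; split_ifs <;> ring
  rw [Finset.sum_congr rfl (fun j _ => h1 j)]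
  simp only [Finset.sum_add_distrib]
  have e2 : ∑ j ∈ range M, -(q j * a j) = -∑ j ∈ range M, q j * a j := by
    rw [Finset.sum_neg_distrib]
  have e3 : ∑ j ∈ range M, (if j = 0 then 0 else q j * b (j - 1))
      = ∑ j ∈ range (M - 1), q (j + 1) * b j := by
    rw [← hM1, Finset.sum_range_succ' (fun j => if j = 0 then 0 else q j * b (j - 1)) (M - 1)]
    simp
  have e4 : ∑ j ∈ range M, -(q j * b j) = -∑ j ∈ range (M - 1), q j * b j := by
    have h5 : ∑ j ∈ range M, q j * b j = ∑ j ∈ range (M - 1), q j * b j := by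
      conv_lhs => rw [← hM1]
      rw [Finset.sum_range_succ, hb, mul_zero, add_zero]
    rw [Finset.sum_neg_distrib, h5]
  rw [e2, e3, e4]
  have e5 : ∑ j ∈ range (M - 1), (q j - q (j + 1)) * b j
      = (∑ j ∈ range (M - 1), q j * b j) - ∑ j ∈ range (M - 1), q (j + 1) * b j := by
    rw [← Finset.sum_sub_distrib]
    exact Finset.sum_congr rfl fun j _ => by ring
  rw [e5]
  ring

lemma nonneg_of_strictMono {f : ℝ → ℝ} (hf : StrictMono f) (h0 : f 0 = 0) (t : ℝ) :
    0 ≤ t * f t := by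
  rcases lt_trichotomy t 0 with h | h | h
  · have hft : f t < 0 := by rw [← h0]; exact hf h
    exact le_of_lt (mul_pos_of_neg_of_neg h hft)
  · simp [h]
  · have hft : 0 < f t := by rw [← h0]; exact hf h
    exact le_of_lt (mul_pos h hft)

lemma pos_of_strictMono {f : ℝ → ℝ} (hf : StrictMono f) (h0 : f 0 = 0) {t : ℝ} (ht : t ≠ 0) :
    0 < t * f t := by
  rcases lt_trichotomy t 0 with h | h | h
  · have hft : f t < 0 := by rw [← h0]; exact hf h
    exact mul_pos_of_neg_of_neg h hft
  · exact absurd h ht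
  · have hft : 0 < f t := by rw [← h0]; exact hf h
    exact mul_pos h hft

end OscDefs
end Osc

open Osc in
theorem stmt14 (N : ℕ) (hN : 2 ≤ N) (U V : ℕ → ℝ → ℝ)
    (hUsm : ∀ i < N, ContDiff ℝ (⊤ : ℕ∞) (U i)) (hVsm : ∀ i < N - 1, ContDiff ℝ (⊤ : ℕ∞) (V i))
    (hU'' : ∀ i < N, ∀ x : ℝ, 0 < deriv (deriv (U i)) x)
    (hV'' : ∀ i < N - 1, ∀ x : ℝ, 0 < deriv (deriv (V i)) x)
    (hU0 : ∀ i < N, deriv (U i) 0 = 0) (hV0 : ∀ i < N - 1, deriv (V i) 0 = 0)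
    (hVtop : ∀ i, N - 1 ≤ i → V i = fun _ => 0) :
    ∀ x : OscState N, x ≠ 0 →
      ∃ k ∈ Finset.Icc 1 (4 * N - 1), iterLie (FOsc N U V) k (HamO N U V) x ≠ 0 := by
  intro x hx
  by_contra hcon
  push_neg at hcon
  have hVsm' : ∀ i, ContDiff ℝ ∞ (V i) := by
    intro i
    by_cases hi : i < N - 1
    · exact (hVsm i hi).of_le (by simp)
    · rw [hVtop i (by omega)]; exact contDiff_const
  have G : Good N U V := ⟨hN, fun i hi => (hUsm i hi).of_le (by simp), hVsm', hVtop⟩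
  have hk : ∀ k, 1 ≤ k → k ≤ 4*N-1 → iterLie (FOsc N U V) k (HamO N U V) x = 0 :=
    fun k h1 h2 => hcon k (Finset.mem_Icc.2 ⟨h1, h2⟩)
  have hbb := G.bb_vanish x hk
  have hgg := G.gg_vanish hV'' x hbb
  have hP : ∀ j, j < N → Pn j x = 0 := by
    intro j hj
    have h := hgg (2*j) (by omega)
    rwa [gg_even] at h
  have hfn : ∀ j, j < N → fn U V j x = 0 := by
    intro j hj
    have h := hgg (2*j+1) (by omega)
    rwa [gg_odd] at h
  have hp1 : x.1 = 0 := by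
    funext i
    show x.1 i = 0
    rw [Pn_coe' i x]
    exact hP i i.isLt
  have hq : x.2 ≠ 0 := by
    intro h2
    exact hx (Prod.ext_iff.2 ⟨hp1, h2⟩)
  obtain ⟨i0, hi0⟩ : ∃ i : Fin N, x.2 i ≠ 0 := by
    by_contra hq2; push_neg at hq2; exact hq (funext hq2)
  have hbtop : deriv (V (N-1)) (qc x (N-1) - qc x (N-1+1)) = 0 := by
    rw [hVtop (N-1) le_rfl]; simp
  have hsum : ∑ j ∈ Finset.range N, qc x j * fn U V j x = 0 :=
    Finset.sum_eq_zero fun j hj => by rw [hfn j (Finset.mem_range.1 hj), mul_zero]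
  have halg := eq_algebra N hN (fun j => qc x j) (fun j => deriv (U j) (qc x j))
    (fun j => deriv (V j) (qc x j - qc x (j+1))) hbtop
  have hconv : ∀ j : ℕ, (if j = 0 then (0:ℝ)
        else deriv (V (j - 1)) (qc x (j - 1) - qc x (j - 1 + 1)))
      = (if j = 0 then 0 else deriv (V (j - 1)) (qc x (j - 1) - qc x j)) := by
    intro j
    by_cases h0 : j = 0
    · simp [h0]
    · have hj : j - 1 + 1 = j := by omega
      simp only [if_neg h0, hj]
  have key : (∑ j ∈ Finset.range N, qc x j * deriv (U j) (qc x j))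
      + ∑ j ∈ Finset.range (N-1), (qc x j - qc x (j+1))
          * deriv (V j) (qc x j - qc x (j+1)) = 0 := by
    have h2 : ∑ j ∈ Finset.range N, qc x j * fn U V j x
        = ∑ j ∈ Finset.range N, qc x j * (-(deriv (U j) (qc x j))
            + (if j = 0 then 0 else deriv (V (j - 1)) (qc x (j - 1) - qc x (j - 1 + 1)))
            - deriv (V j) (qc x j - qc x (j+1))) := by
      refine Finset.sum_congr rfl fun j _ => ?_
      rw [fn_eq, hconv j]
    rw [h2] at hsum
    rw [halg] at hsum
    linarith
  have hA : ∀ j ∈ Finset.range N, 0 ≤ qc x j * deriv (U j) (qc x j) := by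
    intro j hj
    have hjN := Finset.mem_range.1 hj
    exact nonneg_of_strictMono (strictMono_of_deriv_pos (hU'' j hjN)) (hU0 j hjN) _
  have hB : ∀ j ∈ Finset.range (N-1), 0 ≤ (qc x j - qc x (j+1))
      * deriv (V j) (qc x j - qc x (j+1)) := by
    intro j hj
    have hjN := Finset.mem_range.1 hj
    exact nonneg_of_strictMono (strictMono_of_deriv_pos (hV'' j hjN)) (hV0 j hjN) _
  have hApos : 0 < ∑ j ∈ Finset.range N, qc x j * deriv (U j) (qc x j) := by
    refine Finset.sum_pos' hA ⟨(i0 : ℕ), Finset.mem_range.2 i0.isLt, ?_⟩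
    have hne : qc x (i0 : ℕ) ≠ 0 := by rwa [← qc_coe i0 x]
    exact pos_of_strictMono (strictMono_of_deriv_pos (hU'' i0 i0.isLt)) (hU0 i0 i0.isLt) hne
  have hBpos : 0 ≤ ∑ j ∈ Finset.range (N-1), (qc x j - qc x (j+1))
      * deriv (V j) (qc x j - qc x (j+1)) := Finset.sum_nonneg hB
  linarith
end
end

section
/- Suppose all potentials U_k and V_k are smooth and for every k and every x ∈ ℝ one has V_k''(x) ≠ 0 or V_k'''(x) ≠ 0. If (p,q) ∈ ℝ^{2N} satisfies L_F^j H(p,q) = 0 for all integers j with 1 ≤ j ≤ 3·2^{N+1} − 5, then p = 0 and q solves the equilibrium system. -/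
open Real Finset
open scoped ContDiff

noncomputable section

namespace Aux16

variable {E : Type*} [NormedAddCommGroup E] [NormedSpace ℝ E]

/-- Lie derivative. -/
def LD (F : E → E) (g : E → ℝ) : E → ℝ := fun x => fderiv ℝ g x (F x)

variable {F : E → E} {f g : E → ℝ} {x : E}

lemma iterLie_zero : iterLie F 0 g = g := rfl

lemma iterLie_succ (k : ℕ) : iterLie F (k + 1) g = LD F (iterLie F k g) := rfl

lemma iterLie_succ' (k : ℕ) : iterLie F (k + 1) g = iterLie F k (LD F g) := by
  induction k with
  | zero => rfl
  | succ k ih => rw [iterLie_succ (k+1), ih, ← iterLie_succ]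

lemma iterLie_one : iterLie F 1 g = LD F g := rfl

lemma LD_smooth (hF : ContDiff ℝ ∞ F) (hg : ContDiff ℝ ∞ g) : ContDiff ℝ ∞ (LD F g) :=
  (hg.fderiv_right (by norm_num)).clm_apply hF

lemma iterLie_smooth (hF : ContDiff ℝ ∞ F) (hg : ContDiff ℝ ∞ g) (k : ℕ) :
    ContDiff ℝ ∞ (iterLie F k g) := by
  induction k with
  | zero => exact hg
  | succ k ih => exact LD_smooth hF ih

lemma diffAt (hg : ContDiff ℝ ∞ g) (y : E) : DifferentiableAt ℝ g y :=
  (hg.differentiable (by norm_num)).differentiableAt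

lemma LD_add (hf : ContDiff ℝ ∞ f) (hg : ContDiff ℝ ∞ g) :
    LD F (fun y => f y + g y) = fun y => LD F f y + LD F g y := by
  funext y
  simp only [LD, fderiv_fun_add (diffAt hf y) (diffAt hg y)]
  simp

lemma LD_neg : LD F (fun y => -f y) = fun y => -(LD F f y) := by
  funext y
  simp only [LD, fderiv_neg]
  simp

lemma LD_sub (hf : ContDiff ℝ ∞ f) (hg : ContDiff ℝ ∞ g) :
    LD F (fun y => f y - g y) = fun y => LD F f y - LD F g y := by
  funext y
  simp only [LD, fderiv_fun_sub (diffAt hf y) (diffAt hg y)]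
  simp

lemma LD_mul (hf : ContDiff ℝ ∞ f) (hg : ContDiff ℝ ∞ g) :
    LD F (fun y => f y * g y) = fun y => LD F f y * g y + f y * LD F g y := by
  funext y
  simp only [LD, fderiv_fun_mul (diffAt hf y) (diffAt hg y),
    ContinuousLinearMap.add_apply, ContinuousLinearMap.smul_apply, smul_eq_mul]
  ring

lemma LD_const (c : ℝ) : LD F (fun _ => c) = fun _ => 0 := by
  funext y; simp [LD]

lemma LD_comp {ψ : ℝ → ℝ} (hψ : ContDiff ℝ ∞ ψ) (hg : ContDiff ℝ ∞ g) :
    LD F (fun y => ψ (g y)) = fun y => deriv ψ (g y) * LD F g y := by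
  funext y
  have h1 : HasFDerivAt g (fderiv ℝ g y) y := (diffAt hg y).hasFDerivAt
  have h2 : HasDerivAt ψ (deriv ψ (g y)) (g y) := ((diffAt hψ (g y))).hasDerivAt
  have h3 := (h2.comp_hasFDerivAt y h1)
  show fderiv ℝ (ψ ∘ g) y (F y) = _
  simp only [LD, h3.fderiv, ContinuousLinearMap.smul_apply, smul_eq_mul]

lemma iterLie_add (hF : ContDiff ℝ ∞ F) (hf : ContDiff ℝ ∞ f) (hg : ContDiff ℝ ∞ g) (k : ℕ) :
    iterLie F k (fun y => f y + g y) = fun y => iterLie F k f y + iterLie F k g y := by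
  induction k with
  | zero => rfl
  | succ k ih =>
    rw [iterLie_succ, ih, iterLie_succ, iterLie_succ,
      LD_add (iterLie_smooth hF hf k) (iterLie_smooth hF hg k)]

lemma iterLie_neg (k : ℕ) :
    iterLie F k (fun y => -f y) = fun y => -(iterLie F k f y) := by
  induction k with
  | zero => rfl
  | succ k ih => rw [iterLie_succ, ih, iterLie_succ, LD_neg]

lemma iterLie_sub (hF : ContDiff ℝ ∞ F) (hf : ContDiff ℝ ∞ f) (hg : ContDiff ℝ ∞ g) (k : ℕ) :
    iterLie F k (fun y => f y - g y) = fun y => iterLie F k f y - iterLie F k g y := by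
  induction k with
  | zero => rfl
  | succ k ih =>
    rw [iterLie_succ, ih, iterLie_succ, iterLie_succ,
      LD_sub (iterLie_smooth hF hf k) (iterLie_smooth hF hg k)]

/-- Vanishing of all Lie derivatives of order `< m` at `x`. -/
def Van (F : E → E) (g : E → ℝ) (x : E) (m : ℕ) : Prop :=
  ∀ k < m, iterLie F k g x = 0

lemma Van.mono {m m' : ℕ} (h : Van F g x m) (hm : m' ≤ m) : Van F g x m' :=
  fun k hk => h k (lt_of_lt_of_le hk hm)

lemma Van.ld {m : ℕ} (h : Van F g x m) : Van F (LD F g) x (m - 1) := by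
  intro k hk
  rw [← iterLie_succ']
  exact h (k+1) (by omega)

lemma van_of_step {d : ℕ} (h : ∀ e < d, Van F g x e → iterLie F e g x = 0) :
    Van F g x d := by
  intro k hk
  induction k using Nat.strong_induction_on with
  | _ k ih => exact h k hk (fun j hj => ih j hj (lt_trans hj hk))


lemma van_zero : Van F g x 0 := fun k hk => absurd hk (Nat.not_lt_zero k)

lemma van_mul_lt (hF : ContDiff ℝ ∞ F) :
    ∀ (k : ℕ) (f g : E → ℝ), ContDiff ℝ ∞ f → ContDiff ℝ ∞ g →
      ∀ a b : ℕ, Van F f x a → Van F g x b → k < a + b →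
      iterLie F k (fun y => f y * g y) x = 0 := by
  intro k
  induction k with
  | zero =>
    intro f g hf hg a b va vb hk
    show f x * g x = 0
    have hab : 0 < a ∨ 0 < b := by omega
    rcases hab with h | h
    · have := va 0 h; rw [iterLie_zero] at this; rw [this]; ring
    · have := vb 0 h; rw [iterLie_zero] at this; rw [this]; ring
  | succ k ih =>
    intro f g hf hg a b va vb hk
    rw [iterLie_succ', LD_mul hf hg,
      iterLie_add hF ((LD_smooth hF hf).mul hg) (hf.mul (LD_smooth hF hg))]
    beta_reduce
    rw [ih _ _ (LD_smooth hF hf) hg (a-1) b va.ld vb (by omega),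
      ih _ _ hf (LD_smooth hF hg) a (b-1) va vb.ld (by omega), add_zero]

lemma iterLie_mul_top (hF : ContDiff ℝ ∞ F) :
    ∀ (n : ℕ) (f g : E → ℝ), ContDiff ℝ ∞ f → ContDiff ℝ ∞ g →
      ∀ a b : ℕ, a + b = n → Van F f x a → Van F g x b →
      iterLie F n (fun y => f y * g y) x
        = (n.choose a : ℝ) * (iterLie F a f x * iterLie F b g x) := by
  intro n
  induction n with
  | zero =>
    intro f g hf hg a b hab va vb
    obtain ⟨rfl, rfl⟩ : a = 0 ∧ b = 0 := by omega
    show f x * g x = _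
    simp [iterLie_zero]
  | succ n ih =>
    intro f g hf hg a b hab va vb
    rw [iterLie_succ', LD_mul hf hg,
      iterLie_add hF ((LD_smooth hF hf).mul hg) (hf.mul (LD_smooth hF hg))]
    beta_reduce
    rcases a with _ | a'
    · -- a = 0, b = n+1
      have hb : b = n + 1 := by omega
      subst hb
      rw [van_mul_lt hF n _ _ (LD_smooth hF hf) hg 0 (n+1) van_zero vb (by omega)]
      rw [ih _ _ hf (LD_smooth hF hg) 0 n (by omega) va vb.ld]
      rw [← iterLie_succ']
      simp
    · rcases b with _ | b'
      · have ha : a' + 1 = n + 1 := by omega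
        rw [van_mul_lt hF n _ _ hf (LD_smooth hF hg) (a'+1) 0 va van_zero (by omega)]
        rw [ih _ _ (LD_smooth hF hf) hg a' 0 (by omega) va.ld vb]
        rw [← iterLie_succ']
        have : a' = n := by omega
        subst this
        simp
      · have h1 := ih _ _ (LD_smooth hF hf) hg a' (b'+1) (by omega) va.ld vb
        have h2 := ih _ _ hf (LD_smooth hF hg) (a'+1) b' (by omega) va vb.ld
        rw [h1, h2, ← iterLie_succ', ← iterLie_succ']
        have hp : (n+1).choose (a'+1) = n.choose a' + n.choose (a'+1) :=
          Nat.choose_succ_succ n a'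
        rw [hp]
        push_cast
        ring

/-- Square-root of vanishing: if `f * f` vanishes to order `m` with `2d ≤ m+1`,
then `f` vanishes to order `d`. -/
lemma van_sqrt (hF : ContDiff ℝ ∞ F) (hf : ContDiff ℝ ∞ f) {m d : ℕ}
    (h : ∀ k < m, iterLie F k (fun y => f y * f y) x = 0) (hd : 2 * d ≤ m + 1) :
    Van F f x d := by
  apply van_of_step
  intro e he ve
  have htop := iterLie_mul_top hF (e+e) f f hf hf e e rfl ve ve
  rw [h (e+e) (by omega)] at htop
  have hc : ((e+e).choose e : ℝ) ≠ 0 :=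
    Nat.cast_ne_zero.mpr (Nat.choose_pos (by omega)).ne'
  rcases mul_eq_zero.mp htop.symm with h0 | h0
  · exact absurd h0 hc
  · exact mul_self_eq_zero.mp h0

/-- If `s x ≠ 0` and `s * p` vanishes to order `m`, then `p` vanishes to order `m`. -/
lemma van_unit {s p : E → ℝ} (hF : ContDiff ℝ ∞ F) (hs : ContDiff ℝ ∞ s)
    (hp : ContDiff ℝ ∞ p) {m : ℕ} (hsx : s x ≠ 0)
    (h : Van F (fun y => s y * p y) x m) : Van F p x m := by
  apply van_of_step
  intro e he ve
  have htop := iterLie_mul_top hF e s p hs hp 0 e (by omega) van_zero ve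
  rw [h e he] at htop
  have : s x * iterLie F e p x = 0 := by
    have := htop.symm
    simpa [iterLie_zero] using this
  rcases mul_eq_zero.mp this with h0 | h0
  · exact absurd h0 hsx
  · exact h0

/-- The key second case: `s x = 0` but `w x ≠ 0`, where `LD s = w·pk − w·p`. -/
lemma van_case2 {s w p pk : E → ℝ} (hF : ContDiff ℝ ∞ F)
    (hs : ContDiff ℝ ∞ s) (hw : ContDiff ℝ ∞ w) (hp : ContDiff ℝ ∞ p)
    (hpk : ContDiff ℝ ∞ pk)
    (hLDs : LD F s = fun y => w y * pk y - w y * p y)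
    (hsx : s x = 0) (hwx : w x ≠ 0)
    {mk m d : ℕ} (hvpk : Van F pk x mk)
    (hsp : Van F (fun y => s y * p y) x m)
    (hdm : 2 * d ≤ m) (hdk : d ≤ mk) :
    Van F p x d := by
  apply van_of_step
  intro e he ve
  -- s vanishes to order e+1
  have vs : Van F s x (e + 1) := by
    intro k hk
    rcases k with _ | k'
    · rw [iterLie_zero]; exact hsx
    · rw [iterLie_succ', hLDs,
        iterLie_sub hF (hw.mul hpk) (hw.mul hp)]
      beta_reduce
      rw [van_mul_lt hF k' w pk hw hpk 0 mk van_zero hvpk (by omega),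
        van_mul_lt hF k' w p hw hp 0 e van_zero ve (by omega), sub_zero]
  -- compute L^{e+1} s x
  have hse : iterLie F (e+1) s x = -(w x * iterLie F e p x) := by
    rw [iterLie_succ', hLDs, iterLie_sub hF (hw.mul hpk) (hw.mul hp)]
    beta_reduce
    rw [van_mul_lt hF e w pk hw hpk 0 mk van_zero hvpk (by omega)]
    rw [iterLie_mul_top hF e w p hw hp 0 e (by omega) van_zero ve]
    simp [iterLie_zero]
  have htop := iterLie_mul_top hF ((e+1)+e) s p hs hp (e+1) e rfl vs ve
  rw [hsp ((e+1)+e) (by omega), hse] at htop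
  have hc : (((e+1)+e).choose (e+1) : ℝ) ≠ 0 :=
    Nat.cast_ne_zero.mpr (Nat.choose_pos (by omega)).ne'
  rcases mul_eq_zero.mp htop.symm with h | h
  · exact absurd h hc
  · rw [neg_mul, neg_eq_zero] at h
    rcases mul_eq_zero.mp h with h | h
    · rcases mul_eq_zero.mp h with h | h
      · exact absurd h hwx
      · exact h
    · exact h


lemma iterLie_zero_fun (k : ℕ) : iterLie F k (fun _ => (0:ℝ)) = fun _ => (0:ℝ) := by
  induction k with
  | zero => rfl
  | succ k ih => rw [iterLie_succ', LD_const]; exact ih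

lemma van_sub {a : ℕ} (hF : ContDiff ℝ ∞ F) (hf : ContDiff ℝ ∞ f) (hg : ContDiff ℝ ∞ g)
    (vf : Van F f x a) (vg : Van F g x a) : Van F (fun y => f y - g y) x a := by
  intro k hk
  rw [iterLie_sub hF hf hg k]
  beta_reduce
  rw [vf k hk, vg k hk, sub_zero]

section Osc

/-- momentum coordinate as a function, 0 out of range -/
def PP (N : ℕ) (k : ℕ) : OscState N → ℝ := fun y => if h : k < N then y.1 ⟨k, h⟩ else 0

/-- position coordinate as a function, 0 out of range -/
def QQ (N : ℕ) (k : ℕ) : OscState N → ℝ := fun y => qc y k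

/-- `PP` as a continuous linear map -/
def pclmT (N k : ℕ) : OscState N →L[ℝ] ℝ :=
  if h : k < N then (ContinuousLinearMap.proj (⟨k, h⟩ : Fin N)).comp
    (ContinuousLinearMap.fst ℝ (Fin N → ℝ) (Fin N → ℝ)) else 0

def qclmT (N k : ℕ) : OscState N →L[ℝ] ℝ :=
  if h : k < N then (ContinuousLinearMap.proj (⟨k, h⟩ : Fin N)).comp
    (ContinuousLinearMap.snd ℝ (Fin N → ℝ) (Fin N → ℝ)) else 0

lemma PP_clm (N k : ℕ) : PP N k = ⇑(pclmT N k) := by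
  unfold PP pclmT
  split_ifs with h
  · rfl
  · funext y; simp

lemma QQ_clm (N k : ℕ) : QQ N k = ⇑(qclmT N k) := by
  unfold QQ qc qclmT
  split_ifs with h
  · rfl
  · funext y; simp [h]

lemma PP_smooth (N k : ℕ) : ContDiff ℝ ∞ (PP N k) := by
  rw [PP_clm]; exact (pclmT N k).contDiff

lemma QQ_smooth (N k : ℕ) : ContDiff ℝ ∞ (QQ N k) := by
  rw [QQ_clm]; exact (qclmT N k).contDiff

variable {N : ℕ} {U V : ℕ → ℝ → ℝ}

lemma LD_PP_raw (k : ℕ) (hk : k < N) :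
    LD (FOsc N U V) (PP N k) = fun y => (FOsc N U V y).1 ⟨k, hk⟩ := by
  funext y
  rw [LD, PP_clm, (pclmT N k).fderiv]
  unfold pclmT
  rw [dif_pos hk]
  rfl

lemma LD_QQ (k : ℕ) : LD (FOsc N U V) (QQ N k) = PP N k := by
  funext y
  rw [LD, QQ_clm, (qclmT N k).fderiv]
  unfold qclmT PP
  split_ifs with h
  · rfl
  · simp

end Osc

/-- the right-hand side of the `p` equation of motion -/
def Phi (N : ℕ) (U V : ℕ → ℝ → ℝ) (k : ℕ) : OscState N → ℝ := fun y =>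
  -(if k = 0 then PP N k y else 0) - deriv (U k) (QQ N k y)
  + (if k = 0 then 0 else deriv (V (k - 1)) (QQ N (k - 1) y - QQ N k y))
  - deriv (V k) (QQ N k y - QQ N (k + 1) y)

section Osc2

variable {N : ℕ} {U V : ℕ → ℝ → ℝ}

lemma LD_PP (k : ℕ) (hk : k < N) :
    LD (FOsc N U V) (PP N k) = Phi N U V k := by
  rw [LD_PP_raw (U := U) (V := V) k hk]
  funext y
  simp only [FOsc, Phi, PP, QQ, qc, dif_pos hk]

lemma FOsc_smooth (hU1 : ∀ k < N, ContDiff ℝ ∞ (deriv (U k)))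
    (hV1 : ∀ k, ContDiff ℝ ∞ (deriv (V k))) :
    ContDiff ℝ ∞ (FOsc N U V) := by
  have hrw : FOsc N U V = fun y =>
      ((fun i : Fin N =>
        -(if (i : ℕ) = 0 then PP N i y else 0) - deriv (U i) (QQ N i y)
        + (if (i : ℕ) = 0 then 0
            else deriv (V ((i : ℕ) - 1)) (QQ N ((i : ℕ) - 1) y - QQ N i y))
        - deriv (V i) (QQ N i y - QQ N ((i : ℕ) + 1) y)),
       fun i : Fin N => PP N i y) := by
    funext y
    refine Prod.ext ?_ ?_ <;> funext i <;>
      simp only [FOsc, PP, QQ, qc, dif_pos i.isLt]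
  rw [hrw]
  refine ContDiff.prodMk (contDiff_pi.2 fun i => ?_) (contDiff_pi.2 fun i => PP_smooth N i)
  have h1 : ContDiff ℝ ∞ (fun y : OscState N => if (i : ℕ) = 0 then PP N i y else 0) := by
    by_cases h0 : (i : ℕ) = 0
    · simp only [h0, if_true]; exact PP_smooth N 0
    · simp only [h0, if_false]; exact contDiff_const
  have h2 : ContDiff ℝ ∞ (fun y : OscState N => deriv (U i) (QQ N i y)) :=
    (hU1 i i.isLt).comp (QQ_smooth N i)
  have h3 : ContDiff ℝ ∞ (fun y : OscState N =>
      if (i : ℕ) = 0 then 0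
      else deriv (V ((i : ℕ) - 1)) (QQ N ((i : ℕ) - 1) y - QQ N i y)) := by
    by_cases h0 : (i : ℕ) = 0
    · simp only [h0, if_true]; exact contDiff_const
    · simp only [h0, if_false]
      exact (hV1 ((i : ℕ) - 1)).comp ((QQ_smooth N ((i : ℕ) - 1)).sub (QQ_smooth N i))
  have h4 : ContDiff ℝ ∞ (fun y : OscState N =>
      deriv (V i) (QQ N i y - QQ N ((i : ℕ) + 1) y)) :=
    (hV1 i).comp ((QQ_smooth N i).sub (QQ_smooth N ((i : ℕ) + 1)))
  exact ((h1.neg.sub h2).add h3).sub h4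

end Osc2

section LieSum

variable {E : Type*} [NormedAddCommGroup E] [NormedSpace ℝ E] {F : E → E}

lemma LD_sum {ι : Type*} [DecidableEq ι] (s : Finset ι) (f : ι → E → ℝ)
    (hf : ∀ i ∈ s, ContDiff ℝ ∞ (f i)) :
    LD F (fun y => ∑ i ∈ s, f i y) = fun y => ∑ i ∈ s, LD F (f i) y := by
  induction s using Finset.induction_on with
  | empty =>
    simp only [Finset.sum_empty]
    rw [LD_const]
  | insert _ _ hmem ih =>
    rename_i a s'
    simp only [Finset.sum_insert hmem]
    rw [LD_add (hf a (Finset.mem_insert_self a s'))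
      (ContDiff.sum fun i hi => hf i (Finset.mem_insert_of_mem hi))]
    funext y
    rw [ih fun i hi => hf i (Finset.mem_insert_of_mem hi)]

lemma LD_div_const {f : E → ℝ} (hf : ContDiff ℝ ∞ f) (c : ℝ) :
    LD F (fun y => f y / c) = fun y => LD F f y / c := by
  funext y
  simp only [LD, div_eq_mul_inv]
  rw [fderiv_mul_const (diffAt hf y)]
  simp [mul_comm]

end LieSum

section Ham

variable {N : ℕ} {U V : ℕ → ℝ → ℝ}

lemma HamO_eq : HamO N U V = fun x =>
    ∑ i ∈ Finset.range N, PP N i x * PP N i x / 2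
    + ∑ i ∈ Finset.range N, U i (QQ N i x)
    + ∑ i ∈ Finset.range (N - 1), V i (QQ N i x - QQ N (i + 1) x) := by
  funext y
  unfold HamO
  congr 1
  · congr 1
    · rw [← Fin.sum_univ_eq_sum_range (fun j => PP N j y * PP N j y / 2) N]
      refine Finset.sum_congr rfl fun i _ => ?_
      simp only [PP, dif_pos i.isLt, Fin.eta]
      ring
    · rw [← Fin.sum_univ_eq_sum_range (fun j => U j (QQ N j y)) N]
      refine Finset.sum_congr rfl fun i _ => ?_
      simp only [QQ, qc, dif_pos i.isLt, Fin.eta]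

lemma L1ham (i : ℕ) (hi : i < N) :
    LD (FOsc N U V) (fun y => PP N i y * PP N i y / 2)
      = fun y => PP N i y * Phi N U V i y := by
  rw [LD_div_const ((PP_smooth N i).mul (PP_smooth N i)),
    LD_mul (PP_smooth N i) (PP_smooth N i), LD_PP (U := U) (V := V) i hi]
  funext y
  ring

lemma L2ham (i : ℕ) (hi : i < N) (hU0 : ContDiff ℝ ∞ (U i)) :
    LD (FOsc N U V) (fun y => U i (QQ N i y))
      = fun y => PP N i y * deriv (U i) (QQ N i y) := by
  rw [LD_comp hU0 (QQ_smooth N i), LD_QQ (U := U) (V := V) i]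
  funext y
  ring

lemma L3ham (i : ℕ) (hV0 : ContDiff ℝ ∞ (V i)) :
    LD (FOsc N U V) (fun y => V i (QQ N i y - QQ N (i + 1) y))
      = fun y => PP N i y * deriv (V i) (QQ N i y - QQ N (i + 1) y)
          - PP N (i + 1) y * deriv (V i) (QQ N i y - QQ N (i + 1) y) := by
  rw [LD_comp hV0 ((QQ_smooth N i).sub (QQ_smooth N (i + 1)))]
  have h : LD (FOsc N U V) (fun y => QQ N i y - QQ N (i + 1) y)
      = fun y => PP N i y - PP N (i + 1) y := by
    rw [LD_sub (QQ_smooth N i) (QQ_smooth N (i + 1)), LD_QQ (U := U) (V := V) i,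
      LD_QQ (U := U) (V := V) (i + 1)]
  rw [h]
  funext y
  ring

lemma LD_Ham (hN : 2 ≤ N) (hU0 : ∀ k < N, ContDiff ℝ ∞ (U k))
    (hV0 : ∀ k, ContDiff ℝ ∞ (V k))
    (hVtop : ∀ i, N - 1 ≤ i → V i = fun _ => 0) :
    LD (FOsc N U V) (HamO N U V) = fun y => -(PP N 0 y * PP N 0 y) := by
  have hS1 : ∀ i ∈ Finset.range N,
      ContDiff ℝ ∞ (fun y : OscState N => PP N i y * PP N i y / 2) :=
    fun i _ => ((PP_smooth N i).mul (PP_smooth N i)).div_const 2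
  have hS2 : ∀ i ∈ Finset.range N, ContDiff ℝ ∞ (fun y : OscState N => U i (QQ N i y)) :=
    fun i hi => (hU0 i (Finset.mem_range.1 hi)).comp (QQ_smooth N i)
  have hS3 : ∀ i ∈ Finset.range (N - 1),
      ContDiff ℝ ∞ (fun y : OscState N => V i (QQ N i y - QQ N (i + 1) y)) :=
    fun i _ => (hV0 i).comp ((QQ_smooth N i).sub (QQ_smooth N (i + 1)))
  rw [HamO_eq]
  rw [LD_add ((ContDiff.sum hS1).add (ContDiff.sum hS2)) (ContDiff.sum hS3)]
  funext y
  rw [show LD (FOsc N U V) (fun x => (∑ i ∈ Finset.range N, PP N i x * PP N i x / 2)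
      + ∑ i ∈ Finset.range N, U i (QQ N i x))
      = fun x => LD (FOsc N U V) (fun x => ∑ i ∈ Finset.range N, PP N i x * PP N i x / 2) x
        + LD (FOsc N U V) (fun x => ∑ i ∈ Finset.range N, U i (QQ N i x)) x from
    LD_add (ContDiff.sum hS1) (ContDiff.sum hS2)]
  rw [LD_sum (Finset.range N) _ hS1, LD_sum (Finset.range N) _ hS2,
    LD_sum (Finset.range (N - 1)) _ hS3]
  have e1 : ∑ i ∈ Finset.range N, LD (FOsc N U V) (fun y => PP N i y * PP N i y / 2) y
      = ∑ i ∈ Finset.range N, PP N i y * Phi N U V i y :=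
    Finset.sum_congr rfl fun i hi => by
      rw [L1ham (U := U) (V := V) i (Finset.mem_range.1 hi)]
  have e2 : ∑ i ∈ Finset.range N, LD (FOsc N U V) (fun y => U i (QQ N i y)) y
      = ∑ i ∈ Finset.range N, PP N i y * deriv (U i) (QQ N i y) :=
    Finset.sum_congr rfl fun i hi => by
      rw [L2ham (V := V) i (Finset.mem_range.1 hi) (hU0 i (Finset.mem_range.1 hi))]
  have e3 : ∑ i ∈ Finset.range (N - 1),
        LD (FOsc N U V) (fun y => V i (QQ N i y - QQ N (i + 1) y)) y
      = ∑ i ∈ Finset.range (N - 1), (PP N i y * deriv (V i) (QQ N i y - QQ N (i + 1) y)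
          - PP N (i + 1) y * deriv (V i) (QQ N i y - QQ N (i + 1) y)) :=
    Finset.sum_congr rfl fun i hi => by rw [L3ham (U := U) i (hV0 i)]
  beta_reduce
  rw [e1, e2, e3]
  -- expand Phi
  have hsplit : ∑ i ∈ Finset.range N, PP N i y * Phi N U V i y
      = ∑ i ∈ Finset.range N,
        (-(if i = 0 then PP N i y * PP N i y else 0)
          - PP N i y * deriv (U i) (QQ N i y)
          + (if i = 0 then 0
              else PP N i y * deriv (V (i - 1)) (QQ N (i - 1) y - QQ N i y))
          - PP N i y * deriv (V i) (QQ N i y - QQ N (i + 1) y)) :=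
    Finset.sum_congr rfl fun i _ => by
      unfold Phi
      by_cases h0 : i = 0 <;> simp only [h0, if_true, if_false, reduceIte] <;> ring
  rw [hsplit]
  simp only [Finset.sum_sub_distrib, Finset.sum_add_distrib, Finset.sum_neg_distrib]
  have h1 : ∑ i ∈ Finset.range N, (if i = 0 then PP N i y * PP N i y else 0)
      = PP N 0 y * PP N 0 y := by
    rw [Finset.sum_ite_eq' (Finset.range N) 0 (fun i => PP N i y * PP N i y)]
    rw [if_pos (Finset.mem_range.2 (by omega))]
  have hNr : Finset.range N = Finset.range ((N - 1) + 1) := by congr 1; omega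
  have h2 : ∑ i ∈ Finset.range N,
        (if i = 0 then 0 else PP N i y * deriv (V (i - 1)) (QQ N (i - 1) y - QQ N i y))
      = ∑ i ∈ Finset.range (N - 1),
          PP N (i + 1) y * deriv (V i) (QQ N i y - QQ N (i + 1) y) := by
    rw [hNr, Finset.sum_range_succ']
    simp
  have h3 : ∑ i ∈ Finset.range N, PP N i y * deriv (V i) (QQ N i y - QQ N (i + 1) y)
      = ∑ i ∈ Finset.range (N - 1),
          PP N i y * deriv (V i) (QQ N i y - QQ N (i + 1) y) := by
    rw [hNr, Finset.sum_range_succ, hVtop (N - 1) le_rfl]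
    simp
  rw [h1, h2, h3]
  ring

end Ham


lemma derivSmooth {f : ℝ → ℝ} (h : ContDiff ℝ ∞ f) : ContDiff ℝ ∞ (deriv f) :=
  (contDiff_infty_iff_deriv.mp h).2

end Aux16

open Aux16

theorem stmt16 (N : ℕ) (hN : 2 ≤ N) (U V : ℕ → ℝ → ℝ)
    (hUsm : ∀ i < N, ContDiff ℝ (⊤ : ℕ∞) (U i)) (hVsm : ∀ i < N - 1, ContDiff ℝ (⊤ : ℕ∞) (V i))
    (hVnd : ∀ i < N - 1, ∀ x : ℝ,
      deriv (deriv (V i)) x ≠ 0 ∨ deriv (deriv (deriv (V i))) x ≠ 0)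
    (hVtop : ∀ i, N - 1 ≤ i → V i = fun _ => 0)
    (x : OscState N)
    (hx : ∀ j ∈ Finset.Icc 1 (3 * 2 ^ (N + 1) - 5), iterLie (FOsc N U V) j (HamO N U V) x = 0) :
    x.1 = 0 ∧ IsEquilib N U V x.2 := by
  classical
  have hU0 : ∀ k < N, ContDiff ℝ ∞ (U k) := fun k hk => (hUsm k hk).of_le (by simp)
  have hU1 : ∀ k < N, ContDiff ℝ ∞ (deriv (U k)) := fun k hk => derivSmooth (hU0 k hk)
  have hU2 : ∀ k < N, ContDiff ℝ ∞ (deriv (deriv (U k))) := fun k hk => derivSmooth (hU1 k hk)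
  have hV0 : ∀ k, ContDiff ℝ ∞ (V k) := by
    intro k
    by_cases hk : k < N - 1
    · exact (hVsm k hk).of_le (by simp)
    · rw [hVtop k (by omega)]; exact contDiff_const
  have hV1 : ∀ k, ContDiff ℝ ∞ (deriv (V k)) := fun k => derivSmooth (hV0 k)
  have hV2 : ∀ k, ContDiff ℝ ∞ (deriv (deriv (V k))) := fun k => derivSmooth (hV1 k)
  have hV3 : ∀ k, ContDiff ℝ ∞ (deriv (deriv (deriv (V k)))) := fun k => derivSmooth (hV2 k)
  have hFsm : ContDiff ℝ ∞ (FOsc N U V) := FOsc_smooth hU1 hV1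
  have h4N : (4:ℕ) ≤ 2 ^ N := by
    calc (4:ℕ) = 2 ^ 2 := rfl
    _ ≤ 2 ^ N := Nat.pow_le_pow_right (by norm_num) hN
  have hpowN : (2:ℕ) ^ (N + 1) = 2 * 2 ^ N := by rw [pow_succ]; ring
  -- Step 0 : p₀ vanishes to order 3·2^N − 2
  have hsq : ∀ k < 3 * 2 ^ (N + 1) - 5,
      iterLie (FOsc N U V) k (fun y => PP N 0 y * PP N 0 y) x = 0 := by
    intro k hk
    have hmem : k + 1 ∈ Finset.Icc 1 (3 * 2 ^ (N + 1) - 5) :=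
      Finset.mem_Icc.mpr ⟨by omega, by omega⟩
    have h := hx (k + 1) hmem
    rw [iterLie_succ', LD_Ham hN hU0 hV0 hVtop] at h
    rw [iterLie_neg] at h
    simpa using h
  have hμ0 : Van (FOsc N U V) (PP N 0) x (3 * 2 ^ N - 2) :=
    van_sqrt hFsm (PP_smooth N 0) hsq (by omega)
  -- Main induction along the chain
  have key : ∀ k, k + 1 ≤ N → ∀ j ≤ k, Van (FOsc N U V) (PP N j) x (3 * 2 ^ (N - k) - 2) := by
    intro k
    induction k with
    | zero =>
      intro _ j hj
      have hj0 : j = 0 := by omega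
      subst hj0
      simpa using hμ0
    | succ k ih =>
      intro hk1 j hj
      have hkN : k + 1 ≤ N := by omega
      have ihk := ih hkN
      have hb : N - k = (N - (k + 1)) + 1 := by omega
      have hpow : (2:ℕ) ^ (N - k) = 2 * 2 ^ (N - (k + 1)) := by rw [hb, pow_succ]; ring
      have h1pow : 1 ≤ (2:ℕ) ^ (N - (k + 1)) := Nat.one_le_two_pow
      rcases Nat.lt_or_ge j (k + 1) with hjk | hjk
      · exact (ihk j (by omega)).mono (by omega)
      have hj' : j = k + 1 := by omega
      subst hj'
      have hkN1 : k < N - 1 := by omega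
      have hkltN : k < N := by omega
      have hk1ltN : k + 1 < N := by omega
      have vpk : Van (FOsc N U V) (PP N k) x (3 * 2 ^ (N - k) - 2) := ihk k le_rfl
      have vpkm : ∀ j' ≤ k, Van (FOsc N U V) (PP N j') x (3 * 2 ^ (N - k) - 2) := ihk
      -- smoothness of lots of pieces
      have hRsm : ContDiff ℝ ∞ (fun y : OscState N => QQ N k y - QQ N (k + 1) y) :=
        (QQ_smooth N k).sub (QQ_smooth N (k + 1))
      have hssm : ContDiff ℝ ∞
          (fun y : OscState N => deriv (deriv (V k)) (QQ N k y - QQ N (k + 1) y)) :=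
        (hV2 k).comp hRsm
      have hwsm : ContDiff ℝ ∞
          (fun y : OscState N => deriv (deriv (deriv (V k))) (QQ N k y - QQ N (k + 1) y)) :=
        (hV3 k).comp hRsm
      have hgsm : ContDiff ℝ ∞
          (fun y : OscState N => deriv (V k) (QQ N k y - QQ N (k + 1) y)) :=
        (hV1 k).comp hRsm
      have hLDR : LD (FOsc N U V) (fun y => QQ N k y - QQ N (k + 1) y)
          = fun y => PP N k y - PP N (k + 1) y := by
        rw [LD_sub (QQ_smooth N k) (QQ_smooth N (k + 1)), LD_QQ (U := U) (V := V) k,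
          LD_QQ (U := U) (V := V) (k + 1)]
      have hLDg : LD (FOsc N U V) (fun y => deriv (V k) (QQ N k y - QQ N (k + 1) y))
          = fun y => deriv (deriv (V k)) (QQ N k y - QQ N (k + 1) y) * PP N k y
            - deriv (deriv (V k)) (QQ N k y - QQ N (k + 1) y) * PP N (k + 1) y := by
        rw [LD_comp (hV1 k) hRsm, hLDR]
        funext y
        ring
      have hLDs : LD (FOsc N U V)
            (fun y => deriv (deriv (V k)) (QQ N k y - QQ N (k + 1) y))
          = fun y => deriv (deriv (deriv (V k))) (QQ N k y - QQ N (k + 1) y) * PP N k y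
            - deriv (deriv (deriv (V k))) (QQ N k y - QQ N (k + 1) y) * PP N (k + 1) y := by
        rw [LD_comp (hV2 k) hRsm, hLDR]
        funext y
        ring
      -- rearranged equation of motion
      have hgeq : (fun y : OscState N => deriv (V k) (QQ N k y - QQ N (k + 1) y))
          = fun y => -(LD (FOsc N U V) (PP N k) y) - (if k = 0 then PP N k y else 0)
            - deriv (U k) (QQ N k y)
            + (if k = 0 then 0 else deriv (V (k - 1)) (QQ N (k - 1) y - QQ N k y)) := by
        funext y
        have h := congrFun (LD_PP (U := U) (V := V) k hkltN) y
        unfold Phi at h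
        rw [h]
        ring
      have hA : ContDiff ℝ ∞ (LD (FOsc N U V) (PP N k)) := LD_smooth hFsm (PP_smooth N k)
      have hB : ContDiff ℝ ∞ (fun y : OscState N => if k = 0 then PP N k y else 0) := by
        by_cases h0 : k = 0
        · subst h0; simp only [if_true, reduceIte]; exact PP_smooth N 0
        · simp only [h0, if_false]; exact contDiff_const
      have hC : ContDiff ℝ ∞ (fun y : OscState N => deriv (U k) (QQ N k y)) :=
        (hU1 k hkltN).comp (QQ_smooth N k)
      have hD : ContDiff ℝ ∞ (fun y : OscState N =>
          if k = 0 then 0 else deriv (V (k - 1)) (QQ N (k - 1) y - QQ N k y)) := by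
        by_cases h0 : k = 0
        · simp only [h0, if_true, reduceIte]; exact contDiff_const
        · simp only [h0, if_false]
          exact (hV1 (k - 1)).comp ((QQ_smooth N (k - 1)).sub (QQ_smooth N k))
      -- the function L_F g vanishes to order m - 2
      have vLDg : ∀ jj, jj < 3 * 2 ^ (N - k) - 2 - 2 →
          iterLie (FOsc N U V) jj
            (fun y => deriv (deriv (V k)) (QQ N k y - QQ N (k + 1) y) * PP N k y
              - deriv (deriv (V k)) (QQ N k y - QQ N (k + 1) y) * PP N (k + 1) y) x = 0 := by
        intro jj hjj
        rw [← hLDg, ← iterLie_succ', hgeq]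
        rw [iterLie_add hFsm ((hA.neg.sub hB).sub hC) hD]
        beta_reduce
        rw [iterLie_sub hFsm (hA.neg.sub hB) hC]
        beta_reduce
        rw [iterLie_sub hFsm hA.neg hB]
        beta_reduce
        rw [iterLie_neg]
        beta_reduce
        have t1 : iterLie (FOsc N U V) (jj + 1) (LD (FOsc N U V) (PP N k)) x = 0 := by
          rw [← iterLie_succ']
          exact vpk (jj + 2) (by omega)
        have t2 : iterLie (FOsc N U V) (jj + 1)
            (fun y : OscState N => if k = 0 then PP N k y else 0) x = 0 := by
          by_cases h0 : k = 0
          · subst h0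
            simp only [if_true, reduceIte]
            exact vpk (jj + 1) (by omega)
          · simp only [h0, if_false]
            rw [iterLie_zero_fun]
        have t3 : iterLie (FOsc N U V) (jj + 1)
            (fun y : OscState N => deriv (U k) (QQ N k y)) x = 0 := by
          rw [iterLie_succ']
          rw [LD_comp (hU1 k hkltN) (QQ_smooth N k), LD_QQ (U := U) (V := V) k]
          exact van_mul_lt hFsm jj _ _ ((hU2 k hkltN).comp (QQ_smooth N k)) (PP_smooth N k)
            0 (3 * 2 ^ (N - k) - 2) van_zero vpk (by omega)
        have t4 : iterLie (FOsc N U V) (jj + 1)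
            (fun y : OscState N =>
              if k = 0 then 0 else deriv (V (k - 1)) (QQ N (k - 1) y - QQ N k y)) x = 0 := by
          by_cases h0 : k = 0
          · simp only [h0, if_true, reduceIte]
            rw [iterLie_zero_fun]
          · simp only [h0, if_false]
            rw [iterLie_succ']
            have hR'sm : ContDiff ℝ ∞ (fun y : OscState N => QQ N (k - 1) y - QQ N k y) :=
              (QQ_smooth N (k - 1)).sub (QQ_smooth N k)
            rw [LD_comp (hV1 (k - 1)) hR'sm]
            have hLDR' : LD (FOsc N U V) (fun y => QQ N (k - 1) y - QQ N k y)
                = fun y => PP N (k - 1) y - PP N k y := by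
              rw [LD_sub (QQ_smooth N (k - 1)) (QQ_smooth N k), LD_QQ (U := U) (V := V) (k - 1),
                LD_QQ (U := U) (V := V) k]
            rw [hLDR']
            refine van_mul_lt hFsm jj _ _ ((hV2 (k - 1)).comp hR'sm)
              ((PP_smooth N (k - 1)).sub (PP_smooth N k)) 0 (3 * 2 ^ (N - k) - 2) van_zero
              ?_ (by omega)
            exact van_sub hFsm (PP_smooth N (k - 1)) (PP_smooth N k)
              (vpkm (k - 1) (by omega)) vpk
        rw [t1, t2, t3, t4]
        ring
      -- hence s · p_{k+1} vanishes to order m − 2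
      have vsp : Van (FOsc N U V)
          (fun y => deriv (deriv (V k)) (QQ N k y - QQ N (k + 1) y) * PP N (k + 1) y) x
          (3 * 2 ^ (N - k) - 2 - 2) := by
        intro jj hjj
        have h1 := vLDg jj hjj
        have h2 : iterLie (FOsc N U V) jj
            (fun y => deriv (deriv (V k)) (QQ N k y - QQ N (k + 1) y) * PP N k y) x = 0 :=
          van_mul_lt hFsm jj _ _ hssm (PP_smooth N k) 0 (3 * 2 ^ (N - k) - 2) van_zero vpk
            (by omega)
        have h3 := congrFun (iterLie_sub hFsm (hssm.mul (PP_smooth N k))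
          (hssm.mul (PP_smooth N (k + 1))) jj) x
        linarith [h1, h2, h3]
      by_cases hcase : deriv (deriv (V k)) (QQ N k x - QQ N (k + 1) x) = 0
      · have hwx : deriv (deriv (deriv (V k))) (QQ N k x - QQ N (k + 1) x) ≠ 0 := by
          rcases hVnd k hkN1 (QQ N k x - QQ N (k + 1) x) with h | h
          · exact absurd hcase h
          · exact h
        exact van_case2 hFsm hssm hwsm (PP_smooth N (k + 1)) (PP_smooth N k) hLDs hcase hwx
          vpk vsp (by omega) (by omega)
      · exact (van_unit hFsm hssm (PP_smooth N (k + 1)) hcase vsp).mono (by omega)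
  -- Conclusion
  have hfin : ∀ j < N, Van (FOsc N U V) (PP N j) x 4 := by
    intro j hj
    have h := key (N - 1) (by omega) j (by omega)
    have hNN : N - (N - 1) = 1 := by omega
    rw [hNN] at h
    simpa using h
  have hp0 : ∀ i : Fin N, x.1 i = 0 := by
    intro i
    have h := hfin (i : ℕ) i.isLt 0 (by norm_num)
    rw [iterLie_zero] at h
    simpa [PP, dif_pos i.isLt, Fin.eta] using h
  constructor
  · funext i
    simpa using hp0 i
  · intro i
    have h := hfin (i : ℕ) i.isLt 1 (by norm_num)
    rw [show iterLie (FOsc N U V) 1 (PP N (i : ℕ)) = LD (FOsc N U V) (PP N (i : ℕ)) from rfl,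
      LD_PP (U := U) (V := V) (i : ℕ) i.isLt] at h
    unfold Phi at h
    have hPP : PP N (i : ℕ) x = 0 := by
      simpa [PP, dif_pos i.isLt, Fin.eta] using hp0 i
    have hQQ : QQ N (i : ℕ) x = x.2 i := by simp [QQ, qc, dif_pos i.isLt, Fin.eta]
    have hqe : ∀ j : ℕ, QQ N j x = qe x.2 j := fun j => rfl
    rw [hPP, hQQ] at h
    rw [hqe ((i : ℕ) - 1), hqe ((i : ℕ) + 1)] at h
    by_cases h0 : (i : ℕ) = 0 <;> simp only [h0, if_true, if_false, reduceIte] at h ⊢ <;>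
      linarith
end
end

section
/- Suppose the potentials U_k are C¹ and the potentials V_k are C², that there exists R ≥ 0 such that V_k''(x) > 0 whenever |x| ≥ R (for every k), and that U_k'(x) → +∞ as x → +∞ and U_k'(x) → −∞ as x → −∞ (for every k). Then the set of solutions q ∈ ℝ^N of the equilibrium system is bounded. -/
/-! Since `V_k'` is increasing outside `[-R, R]`, it is bounded above on `(-∞, 0]` and below on
`[0, ∞)`. At a site `m` where an equilibrium `q` is maximal, both springs attached to `m` are
stretched into exactly these half-lines, so the balance of forces bounds `U_m'(q_m)` by a
constant independent of `q`, and the coercivity of `U_m'` bounds `q_m`. The lower bound is the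
same argument for the reflected chain `q ↦ -q`, `U_k ↦ U_k(-·)`, `V_k ↦ V_k(-·)`. -/

open Real Finset

noncomputable section

open Filter Topology

section MonotoneTail

variable {α β : Type*} [LinearOrder α] [TopologicalSpace α] [CompactIccSpace α]
  [LinearOrder β] [TopologicalSpace β] {f : α → β} {a b : α}

theorem bddAbove_image_Iic_of_monotoneOn [ClosedIciTopology β] (hf : ContinuousOn f (Set.Icc a b))
    (hmono : MonotoneOn f (Set.Iic a)) : BddAbove (f '' Set.Iic b) := by
  have : Nonempty β := ⟨f a⟩
  have htail : BddAbove (f '' Set.Iic a) :=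
    ⟨f a, Set.forall_mem_image.2 fun _ hx => hmono hx Set.self_mem_Iic hx⟩
  exact (htail.union (isCompact_Icc.bddAbove_image hf)).mono
    ((Set.image_mono Set.Iic_subset_Iic_union_Icc).trans (Set.image_union _ _ _).subset)

theorem bddBelow_image_Ici_of_monotoneOn [ClosedIicTopology β] (hf : ContinuousOn f (Set.Icc a b))
    (hmono : MonotoneOn f (Set.Ici b)) : BddBelow (f '' Set.Ici a) := by
  have : Nonempty β := ⟨f b⟩
  have htail : BddBelow (f '' Set.Ici b) :=
    ⟨f b, Set.forall_mem_image.2 fun _ hx => hmono Set.self_mem_Ici hx hx⟩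
  exact ((isCompact_Icc.bddBelow_image hf).union htail).mono
    ((Set.image_mono Set.Ici_subset_Icc_union_Ici).trans (Set.image_union _ _ _).subset)

end MonotoneTail

section PositiveDerivOutsideCompact

variable {g : ℝ → ℝ} {R : ℝ}

theorem monotoneOn_Ici_of_deriv_pos (hg : Continuous g)
    (hpos : ∀ x, R ≤ |x| → 0 < deriv g x) : MonotoneOn g (Set.Ici R) := by
  refine (strictMonoOn_of_deriv_pos (convex_Ici R) hg.continuousOn
    fun x hx => hpos x ?_).monotoneOn
  rw [interior_Ici] at hx
  exact (le_of_lt hx).trans (le_abs_self x)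

theorem monotoneOn_Iic_neg_of_deriv_pos (hg : Continuous g)
    (hpos : ∀ x, R ≤ |x| → 0 < deriv g x) : MonotoneOn g (Set.Iic (-R)) := by
  refine (strictMonoOn_of_deriv_pos (convex_Iic (-R)) hg.continuousOn
    fun x hx => hpos x ?_).monotoneOn
  rw [interior_Iic] at hx
  exact (le_neg.1 (le_of_lt hx)).trans (neg_le_abs x)

theorem eventually_bounds_of_deriv_pos (hg : Continuous g)
    (hpos : ∀ x, R ≤ |x| → 0 < deriv g x) :
    ∀ᶠ A in atTop, (∀ x ≤ 0, g x ≤ A) ∧ ∀ x, 0 ≤ x → -A ≤ g x := by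
  obtain ⟨A₁, hA₁⟩ := bddAbove_image_Iic_of_monotoneOn (b := 0) hg.continuousOn
    (monotoneOn_Iic_neg_of_deriv_pos hg hpos)
  obtain ⟨A₂, hA₂⟩ := bddBelow_image_Ici_of_monotoneOn (a := 0) hg.continuousOn
    (monotoneOn_Ici_of_deriv_pos hg hpos)
  filter_upwards [eventually_ge_atTop A₁, eventually_ge_atTop (-A₂)] with A h₁ h₂
  exact ⟨fun x hx => (hA₁ ⟨x, hx, rfl⟩).trans h₁,
    fun x hx => (neg_le.1 h₂).trans (hA₂ ⟨x, hx, rfl⟩)⟩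

end PositiveDerivOutsideCompact

theorem Filter.Tendsto.eventually_forall_le_of_le {α β : Type*} [LinearOrder α] [Nonempty α]
    [Preorder β] [NoMaxOrder β] {f : α → β} (hf : Tendsto f atTop atTop) (c : β) :
    ∀ᶠ M in atTop, ∀ x, f x ≤ c → x ≤ M := by
  obtain ⟨a, ha⟩ := eventually_atTop.1 (hf.eventually_gt_atTop c)
  filter_upwards [eventually_ge_atTop a] with M hM x hx
  by_contra! hxM
  exact (ha x (hM.trans hxM.le)).not_ge hx

section Equilibrium

variable {N : ℕ} {U V : ℕ → ℝ → ℝ} {q : Fin N → ℝ}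

theorem qe_of_lt (q : Fin N → ℝ) {i : ℕ} (h : i < N) : qe q i = q ⟨i, h⟩ := dif_pos h

theorem qe_neg (q : Fin N → ℝ) (i : ℕ) : qe (-q) i = -qe q i := by
  unfold qe
  split_ifs <;> simp

theorem IsEquilib.deriv_le_at_max (hq : IsEquilib N U V q)
    (hVtop : ∀ i, N - 1 ≤ i → V i = fun _ => 0) {A : ℝ} (hA : 0 ≤ A)
    (hVle : ∀ j < N - 1, ∀ x ≤ 0, deriv (V j) x ≤ A)
    (hVge : ∀ j < N - 1, ∀ x, 0 ≤ x → -A ≤ deriv (V j) x)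
    {m : Fin N} (hm : ∀ i, q i ≤ q m) : deriv (U m) (q m) ≤ 2 * A := by
  have hleft : (if (m : ℕ) = 0 then 0 else
      deriv (V ((m : ℕ) - 1)) (qe q ((m : ℕ) - 1) - q m)) ≤ A := by
    split_ifs with h0
    · exact hA
    · refine hVle _ (by omega) _ ?_
      rw [qe_of_lt q (by omega : (m : ℕ) - 1 < N)]
      linarith [hm ⟨(m : ℕ) - 1, by omega⟩]
  have hright : -A ≤ deriv (V m) (q m - qe q ((m : ℕ) + 1)) := by
    by_cases hlt : (m : ℕ) + 1 < N
    · refine hVge _ (by omega) _ ?_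
      rw [qe_of_lt q hlt]
      linarith [hm ⟨(m : ℕ) + 1, hlt⟩]
    · simp [hVtop m (by omega), hA]
  linarith [hq m]

theorem IsEquilib.reflect (hq : IsEquilib N U V q) :
    IsEquilib N (fun i x => U i (-x)) (fun i x => V i (-x)) (-q) := by
  intro i
  simp only [deriv_comp_neg, qe_neg, Pi.neg_apply, neg_neg, neg_sub_neg, neg_sub]
  have := hq i
  split_ifs at this ⊢ <;> linarith

theorem exists_forall_le_of_isEquilib (hVsm : ∀ i < N - 1, ContDiff ℝ 2 (V i))
    (hVtop : ∀ i, N - 1 ≤ i → V i = fun _ => 0) {R : ℝ}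
    (hVconv : ∀ i < N - 1, ∀ x : ℝ, R ≤ |x| → 0 < deriv (deriv (V i)) x)
    (hUtop : ∀ i < N, Tendsto (deriv (U i)) atTop atTop) :
    ∃ M, ∀ q, IsEquilib N U V q → ∀ i, q i ≤ M := by
  obtain ⟨A, hA, hV⟩ : ∃ A, 0 ≤ A ∧ ∀ j < N - 1,
      (∀ x ≤ 0, deriv (V j) x ≤ A) ∧ ∀ x, 0 ≤ x → -A ≤ deriv (V j) x :=
    ((eventually_ge_atTop 0).and ((eventually_all_finite (Set.finite_Iio (N - 1))).2
      fun j hj => eventually_bounds_of_deriv_pos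
        ((hVsm j hj).continuous_deriv (by norm_num)) (hVconv j hj))).exists
  obtain ⟨M, hM⟩ : ∃ M, ∀ i < N, ∀ x, deriv (U i) x ≤ 2 * A → x ≤ M :=
    ((eventually_all_finite (Set.finite_Iio N)).2
      fun i hi => (hUtop i hi).eventually_forall_le_of_le (2 * A)).exists
  refine ⟨M, fun q hq i => ?_⟩
  have : Nonempty (Fin N) := ⟨i⟩
  obtain ⟨m, hm⟩ := Finite.exists_max q
  exact (hm i).trans (hM m m.isLt _ <| hq.deriv_le_at_max hVtop hA
    (fun j hj => (hV j hj).1) (fun j hj => (hV j hj).2) hm)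

end Equilibrium

theorem deriv_deriv_comp_neg {𝕜 F : Type*} [NontriviallyNormedField 𝕜] [NormedAddCommGroup F]
    [NormedSpace 𝕜 F] (f : 𝕜 → F) (x : 𝕜) :
    deriv (deriv fun y => f (-y)) x = deriv (deriv f) (-x) := by
  have hd : (deriv fun y => f (-y)) = -fun y => deriv f (-y) := funext (deriv_comp_neg f)
  rw [hd, deriv.neg, deriv_comp_neg, neg_neg]

theorem tendsto_deriv_comp_neg_atTop {f : ℝ → ℝ} (hf : Tendsto (deriv f) atBot atBot) :
    Tendsto (deriv fun x => f (-x)) atTop atTop := by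
  rw [show (deriv fun x => f (-x)) = Neg.neg ∘ deriv f ∘ Neg.neg from funext (deriv_comp_neg f)]
  exact tendsto_neg_atBot_atTop.comp (hf.comp tendsto_neg_atTop_atBot)

theorem stmt17_general (N : ℕ) (U V : ℕ → ℝ → ℝ)
    (hVsm : ∀ i < N - 1, ContDiff ℝ 2 (V i))
    (hVtop : ∀ i, N - 1 ≤ i → V i = fun _ => 0)
    (R : ℝ)
    (hVconv : ∀ i < N - 1, ∀ x : ℝ, R ≤ |x| → 0 < deriv (deriv (V i)) x)
    (hUtop : ∀ i < N, Filter.Tendsto (deriv (U i)) Filter.atTop Filter.atTop)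
    (hUbot : ∀ i < N, Filter.Tendsto (deriv (U i)) Filter.atBot Filter.atBot) :
    Bornology.IsBounded {q : Fin N → ℝ | IsEquilib N U V q} := by
  obtain ⟨M₁, hM₁⟩ := exists_forall_le_of_isEquilib hVsm hVtop hVconv hUtop
  obtain ⟨M₂, hM₂⟩ := exists_forall_le_of_isEquilib
    (U := fun i x => U i (-x)) (V := fun i x => V i (-x))
    (fun i hi => (hVsm i hi).comp contDiff_neg)
    (fun i hi => funext fun _ => by simp [hVtop i hi])
    (fun i hi x hx => by rw [deriv_deriv_comp_neg]; exact hVconv i hi _ (by rwa [abs_neg]))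
    (fun i hi => tendsto_deriv_comp_neg_atTop (hUbot i hi))
  refine (Metric.isBounded_Icc (fun _ => -M₂) fun _ => M₁).subset fun q hq =>
    ⟨fun i => ?_, fun i => hM₁ q hq i⟩
  exact neg_le.1 (hM₂ (-q) hq.reflect i)

theorem stmt17 (N : ℕ) (hN : 2 ≤ N) (U V : ℕ → ℝ → ℝ)
    (hUsm : ∀ i < N, ContDiff ℝ 1 (U i)) (hVsm : ∀ i < N - 1, ContDiff ℝ 2 (V i))
    (hVtop : ∀ i, N - 1 ≤ i → V i = fun _ => 0)
    (R : ℝ) (hR : 0 ≤ R)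
    (hVconv : ∀ i < N - 1, ∀ x : ℝ, R ≤ |x| → 0 < deriv (deriv (V i)) x)
    (hUtop : ∀ i < N, Filter.Tendsto (deriv (U i)) Filter.atTop Filter.atTop)
    (hUbot : ∀ i < N, Filter.Tendsto (deriv (U i)) Filter.atBot Filter.atBot) :
    Bornology.IsBounded {q : Fin N → ℝ | IsEquilib N U V q} :=
  stmt17_general N U V hVsm hVtop R hVconv hUtop hUbot
end
end

section
/- Suppose the potentials U_k are C¹, the potentials V_k are C², and there exists R ≥ 0 such that V_k''(x) > 0 whenever |x| ≥ R (for every k). Set M := 1 + max_{1 ≤ k ≤ N−1} max_{|x| ≤ R} |V_k'(x)| and let a > R be such that U_k'(x) ≥ 2M for all x ≥ a and all 1 ≤ k ≤ N. Then every solution q ∈ ℝ^N of the equilibrium system satisfies q_k < a for every 1 ≤ k ≤ N. -/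
open Real Finset

noncomputable section

/-!
Let `m` be an index where `q` is maximal and suppose `q m ≥ a`. Outside `[-R, R]` each `V_k'` is
increasing, so on `x ≥ 0` it is bounded below, and on `x ≤ 0` bounded above, by its values on
`[-R, R]`, i.e. by `∓(M - 1)`. Since `q m - q (m + 1) ≥ 0` and `q (m - 1) - q m ≤ 0`, the two
interaction forces at `m` are at least `-(M - 1)` each (a missing neighbour contributes `0`, and
`M ≥ 1`), while `U_m'(q m) ≥ 2M`; so the left side of
the `m`-th equilibrium equation is at least `2`, a contradiction.
-/

open Set

section DerivPosOutside

variable {g : ℝ → ℝ} {R B x : ℝ}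

theorem neg_le_of_deriv_pos_of_abs_ge (hg : Continuous g) (hR : 0 ≤ R)
    (hderiv : ∀ y, R ≤ |y| → 0 < deriv g y) (hB : ∀ y, |y| ≤ R → |g y| ≤ B) (hx : 0 ≤ x) :
    -B ≤ g x := by
  rcases le_or_gt x R with hxR | hRx
  · exact (abs_le.mp (hB x (by rwa [abs_of_nonneg hx]))).1
  have hmono : StrictMonoOn g (Ici R) := by
    refine strictMonoOn_of_deriv_pos (convex_Ici R) hg.continuousOn fun y hy => hderiv y ?_
    rw [interior_Ici] at hy
    exact hy.le.trans (le_abs_self y)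
  calc -B ≤ g R := (abs_le.mp (hB R (abs_of_nonneg hR).le)).1
    _ ≤ g x := (hmono self_mem_Ici hRx.le hRx).le

theorem le_of_deriv_pos_of_abs_ge (hg : Continuous g) (hR : 0 ≤ R)
    (hderiv : ∀ y, R ≤ |y| → 0 < deriv g y) (hB : ∀ y, |y| ≤ R → |g y| ≤ B) (hx : x ≤ 0) :
    g x ≤ B := by
  -- Apply the previous lemma to the reflection `y ↦ -g (-y)`, which has derivative `g' (-y)`.
  have h := neg_le_of_deriv_pos_of_abs_ge (g := fun y => -g (-y)) (hg.comp continuous_neg).neg hR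
    (fun y hy => by
      rw [deriv.fun_neg, deriv_comp_neg, neg_neg]
      exact hderiv (-y) (by rwa [abs_neg]))
    (fun y hy => by rw [abs_neg]; exact hB (-y) (by rwa [abs_neg]))
    (neg_nonneg.mpr hx)
  simpa using h

end DerivPosOutside

theorem bddAbove_abs_apply_of_abs_le {f : ℕ → ℝ → ℝ} {n : ℕ} (hf : ∀ i < n, Continuous (f i))
    (R : ℝ) : BddAbove {y : ℝ | ∃ i < n, ∃ x : ℝ, |x| ≤ R ∧ y = |f i x|} := by
  have hcompact : IsCompact (⋃ i ∈ Set.Iio n, (fun x => |f i x|) '' Icc (-R) R) :=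
    (finite_Iio n).isCompact_biUnion fun i hi => isCompact_Icc.image (hf i hi).abs
  refine hcompact.bddAbove.mono ?_
  rintro _ ⟨i, hi, x, hx, rfl⟩
  exact mem_biUnion hi ⟨x, abs_le.mp hx, rfl⟩

theorem qe_le {N : ℕ} {q : Fin N → ℝ} {c : ℝ} (hq : ∀ k, q k ≤ c) {i : ℕ} (hi : i < N) :
    qe q i ≤ c := by
  rw [qe, dif_pos hi]
  exact hq _

theorem stmt18_general (N : ℕ) (U V : ℕ → ℝ → ℝ)
    (hVsm : ∀ i < N - 1, ContDiff ℝ 2 (V i))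
    (hVtop : ∀ i, N - 1 ≤ i → V i = fun _ => 0)
    (R : ℝ) (hR : 0 ≤ R)
    (hVconv : ∀ i < N - 1, ∀ x : ℝ, R ≤ |x| → 0 < deriv (deriv (V i)) x)
    (M : ℝ)
    (hM : M = 1 + sSup {y : ℝ | ∃ i < N - 1, ∃ x : ℝ, |x| ≤ R ∧ y = |deriv (V i) x|})
    (a : ℝ)
    (hUa : ∀ i < N, ∀ x : ℝ, a ≤ x → 2 * M ≤ deriv (U i) x)
    (q : Fin N → ℝ) (hq : IsEquilib N U V q) :
    ∀ i : Fin N, q i < a := by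
  have hV' : ∀ i < N - 1, Continuous (deriv (V i)) := fun i hi =>
    (hVsm i hi).continuous_deriv one_le_two
  have hbound : ∀ i < N - 1, ∀ x, |x| ≤ R → |deriv (V i) x| ≤ M - 1 := fun i hi x hx => by
    rw [hM, add_sub_cancel_left]
    exact le_csSup (bddAbove_abs_apply_of_abs_le hV' R) ⟨i, hi, x, hx, rfl⟩
  have hM1 : 1 ≤ M := by
    rw [hM, le_add_iff_nonneg_right]
    exact Real.sSup_nonneg fun _ ⟨_, _, _, _, hy⟩ => hy ▸ abs_nonneg _
  intro j
  by_contra! hj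
  obtain ⟨m, -, hm⟩ := Finset.exists_max_image Finset.univ q ⟨j, Finset.mem_univ j⟩
  have hmax : ∀ k, q k ≤ q m := fun k => hm k (Finset.mem_univ k)
  have hprev : (if (m : ℕ) = 0 then 0
      else deriv (V ((m : ℕ) - 1)) (qe q ((m : ℕ) - 1) - q m)) ≤ M - 1 := by
    split_ifs with hm0
    · linarith
    · exact le_of_deriv_pos_of_abs_ge (hV' _ (by omega)) hR (hVconv _ (by omega))
        (hbound _ (by omega)) (sub_nonpos.mpr (qe_le hmax (by omega)))
  have hnext : -(M - 1) ≤ deriv (V m) (q m - qe q ((m : ℕ) + 1)) := by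
    by_cases hmN : (m : ℕ) + 1 < N
    · exact neg_le_of_deriv_pos_of_abs_ge (hV' _ (by omega)) hR (hVconv _ (by omega))
        (hbound _ (by omega)) (sub_nonneg.mpr (qe_le hmax hmN))
    · rw [hVtop m (by omega), deriv_const']
      linarith
  linarith [hq m, hUa m m.isLt _ (hj.trans (hmax j))]

theorem stmt18 (N : ℕ) (hN : 2 ≤ N) (U V : ℕ → ℝ → ℝ)
    (hUsm : ∀ i < N, ContDiff ℝ 1 (U i)) (hVsm : ∀ i < N - 1, ContDiff ℝ 2 (V i))
    (hVtop : ∀ i, N - 1 ≤ i → V i = fun _ => 0)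
    (R : ℝ) (hR : 0 ≤ R)
    (hVconv : ∀ i < N - 1, ∀ x : ℝ, R ≤ |x| → 0 < deriv (deriv (V i)) x)
    (M : ℝ)
    (hM : M = 1 + sSup {y : ℝ | ∃ i < N - 1, ∃ x : ℝ, |x| ≤ R ∧ y = |deriv (V i) x|})
    (a : ℝ) (haR : R < a)
    (hUa : ∀ i < N, ∀ x : ℝ, a ≤ x → 2 * M ≤ deriv (U i) x)
    (q : Fin N → ℝ) (hq : IsEquilib N U V q) :
    ∀ i : Fin N, q i < a :=
  stmt18_general N U V hVsm hVtop R hR hVconv M hM a hUa q hq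
end
end

section
/- Suppose all potentials U_k and V_k are smooth, there exists R ≥ 0 such that V_k''(x) > 0 whenever |x| ≥ R (for every k), U_k'(x) → +∞ as x → +∞ and U_k'(x) → −∞ as x → −∞ (for every k), and for every k and every x ∈ ℝ one has V_k''(x) ≠ 0 or V_k'''(x) ≠ 0. Then there exists a bounded set K ⊂ ℝ^{2N} such that for every (p,q) ∉ K there is an integer j with 1 ≤ j ≤ 3·2^{N+1} − 5 for which L_F^j H(p,q) ≠ 0. -/
open Real Finset

noncomputable section

open scoped ContDiff

namespace Aux
variable {E : Type*} [NormedAddCommGroup E] [NormedSpace ℝ E]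

/-- single Lie derivative -/
def lie (F : E → E) (g : E → ℝ) : E → ℝ := fun x => fderiv ℝ g x (F x)

lemma iterLie_zero (F : E → E) (g : E → ℝ) : iterLie F 0 g = g := rfl

lemma iterLie_succ (F : E → E) (k : ℕ) (g : E → ℝ) :
    iterLie F (k+1) g = lie F (iterLie F k g) := rfl

lemma iterLie_succ' (F : E → E) (k : ℕ) (g : E → ℝ) :
    iterLie F (k+1) g = iterLie F k (lie F g) := by
  induction k with
  | zero => rfl
  | succ k ih => rw [iterLie_succ F (k+1) g, ih, ← iterLie_succ]

variable {F : E → E}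

lemma one_le_inf : (∞ : WithTop ℕ∞) ≠ 0 := by simp

lemma lie_smooth (hF : ContDiff ℝ ∞ F) {g : E → ℝ} (hg : ContDiff ℝ ∞ g) : ContDiff ℝ ∞ (lie F g) :=
  (hg.fderiv_right (le_refl _)).clm_apply hF

lemma iterLie_smooth (hF : ContDiff ℝ ∞ F) {g : E → ℝ} (hg : ContDiff ℝ ∞ g) (k : ℕ) :
    ContDiff ℝ ∞ (iterLie F k g) := by
  induction k with
  | zero => exact hg
  | succ k ih => rw [iterLie_succ]; exact lie_smooth hF ih

lemma lie_add {f g : E → ℝ} (hf : ContDiff ℝ ∞ f) (hg : ContDiff ℝ ∞ g) :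
    lie F (fun x => f x + g x) = fun x => lie F f x + lie F g x := by
  funext x
  simp only [lie]
  rw [fderiv_fun_add (hf.differentiable one_le_inf).differentiableAt
    (hg.differentiable one_le_inf).differentiableAt]
  simp

lemma lie_mul {f g : E → ℝ} (hf : ContDiff ℝ ∞ f) (hg : ContDiff ℝ ∞ g) :
    lie F (fun x => f x * g x) = fun x => f x * lie F g x + g x * lie F f x := by
  funext x
  simp only [lie]
  rw [fderiv_fun_mul (hf.differentiable one_le_inf).differentiableAt
    (hg.differentiable one_le_inf).differentiableAt]
  simp [mul_comm]

lemma lie_const (c : ℝ) : lie F (fun _ => c) = fun _ => (0:ℝ) := by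
  funext x; simp [lie]

lemma lie_sum {ι : Type*} (s : Finset ι) (f : ι → E → ℝ)
    (hf : ∀ i ∈ s, ContDiff ℝ ∞ (f i)) :
    lie F (fun x => ∑ i ∈ s, f i x) = fun x => ∑ i ∈ s, lie F (f i) x := by
  funext x
  simp only [lie]
  rw [fderiv_fun_sum (fun i hi => ((hf i hi).differentiable one_le_inf).differentiableAt)]
  simp

lemma lie_comp {φ : ℝ → ℝ} {f : E → ℝ} (hφ : ContDiff ℝ ∞ φ) (hf : ContDiff ℝ ∞ f) :
    lie F (fun x => φ (f x)) = fun x => deriv φ (f x) * lie F f x := by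
  funext x
  simp only [lie]
  rw [show (fun x => φ (f x)) = φ ∘ f from rfl, fderiv_comp x (hφ.differentiable one_le_inf).differentiableAt.hasDerivAt.differentiableAt
    ((hf.differentiable one_le_inf).differentiableAt)]
  simp [mul_comm]

end Aux
namespace Aux
variable {E : Type*} [NormedAddCommGroup E] [NormedSpace ℝ E]
variable {F : E → E}

lemma lie_neg {f : E → ℝ} (hf : ContDiff ℝ ∞ f) :
    lie F (fun x => -f x) = fun x => -(lie F f x) := by
  funext x
  simp only [lie]
  rw [fderiv_fun_neg]
  simp

lemma iterLie_add (hF : ContDiff ℝ ∞ F) {f g : E → ℝ}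
    (hf : ContDiff ℝ ∞ f) (hg : ContDiff ℝ ∞ g) (n : ℕ) :
    iterLie F n (fun x => f x + g x) = fun x => iterLie F n f x + iterLie F n g x := by
  induction n with
  | zero => rfl
  | succ n ih =>
    rw [iterLie_succ, ih, lie_add (iterLie_smooth hF hf n) (iterLie_smooth hF hg n),
      ← iterLie_succ, ← iterLie_succ]

lemma iterLie_neg (hF : ContDiff ℝ ∞ F) {f : E → ℝ} (hf : ContDiff ℝ ∞ f) (n : ℕ) :
    iterLie F n (fun x => -f x) = fun x => -(iterLie F n f x) := by
  induction n with
  | zero => rfl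
  | succ n ih =>
    rw [iterLie_succ, ih, lie_neg (iterLie_smooth hF hf n), ← iterLie_succ]

lemma iterLie_sub (hF : ContDiff ℝ ∞ F) {f g : E → ℝ}
    (hf : ContDiff ℝ ∞ f) (hg : ContDiff ℝ ∞ g) (n : ℕ) :
    iterLie F n (fun x => f x - g x) = fun x => iterLie F n f x - iterLie F n g x := by
  have : (fun x => f x - g x) = fun x => f x + -(g x) := by funext x; ring
  rw [this, iterLie_add hF hf hg.neg n, iterLie_neg hF hg n]
  funext x; ring

lemma iterLie_const (c : ℝ) (n : ℕ) (hn : 1 ≤ n) :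
    iterLie F n (fun _ : E => c) = fun _ => (0:ℝ) := by
  obtain ⟨k, rfl⟩ : ∃ k, n = k + 1 := ⟨n - 1, by omega⟩
  rw [iterLie_succ', lie_const]
  induction k with
  | zero => rfl
  | succ k ih => rw [iterLie_succ, ih (by omega), lie_const]

end Aux
namespace Aux
variable {E : Type*} [NormedAddCommGroup E] [NormedSpace ℝ E]
variable {F : E → E}

/-- Leibniz binomial formula for iterated Lie derivatives. -/
lemma iterLie_mul (hF : ContDiff ℝ ∞ F) {f g : E → ℝ}
    (hf : ContDiff ℝ ∞ f) (hg : ContDiff ℝ ∞ g) (n : ℕ) :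
    iterLie F n (fun x => f x * g x)
      = fun x => ∑ k ∈ Finset.range (n+1),
          (n.choose k : ℝ) * (iterLie F k f x * iterLie F (n-k) g x) := by
  induction n with
  | zero => funext x; simp [iterLie_zero]
  | succ n ih =>
    rw [iterLie_succ, ih]
    funext x
    have hA : ∀ k, DifferentiableAt ℝ (iterLie F k f) x :=
      fun k => ((iterLie_smooth hF hf k).differentiable one_le_inf).differentiableAt
    have hB : ∀ k, DifferentiableAt ℝ (iterLie F k g) x :=
      fun k => ((iterLie_smooth hF hg k).differentiable one_le_inf).differentiableAt
    have hD : HasFDerivAt (fun y => ∑ k ∈ Finset.range (n+1),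
          (n.choose k : ℝ) * (iterLie F k f y * iterLie F (n-k) g y))
        (∑ k ∈ Finset.range (n+1), (n.choose k : ℝ) •
          (iterLie F k f x • fderiv ℝ (iterLie F (n-k) g) x
            + iterLie F (n-k) g x • fderiv ℝ (iterLie F k f) x)) x := by
      apply HasFDerivAt.fun_sum
      intro k _
      exact (((hA k).hasFDerivAt).mul ((hB (n-k)).hasFDerivAt)).const_mul _
    have hlie : lie F (fun y => ∑ k ∈ Finset.range (n+1),
          (n.choose k : ℝ) * (iterLie F k f y * iterLie F (n-k) g y)) x
        = ∑ k ∈ Finset.range (n+1), (n.choose k : ℝ) *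
            (iterLie F k f x * iterLie F (n-k+1) g x
              + iterLie F (n-k) g x * iterLie F (k+1) f x) := by
      show fderiv ℝ _ x (F x) = _
      rw [hD.fderiv]
      simp only [ContinuousLinearMap.coe_sum', Finset.sum_apply,
        ContinuousLinearMap.coe_smul', Pi.smul_apply, ContinuousLinearMap.add_apply,
        smul_eq_mul]
      refine Finset.sum_congr rfl (fun k _ => ?_)
      have e1 : fderiv ℝ (iterLie F (n-k) g) x (F x) = iterLie F (n-k+1) g x := rfl
      have e2 : fderiv ℝ (iterLie F k f) x (F x) = iterLie F (k+1) f x := rfl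
      rw [e1, e2]
    rw [hlie]
    -- now pure algebra with binomial coefficients
    have key : ∀ (A B : ℕ → ℝ),
        ∑ k ∈ Finset.range (n+1), (n.choose k : ℝ) * (A k * B (n-k+1) + B (n-k) * A (k+1))
          = ∑ k ∈ Finset.range (n+2), ((n+1).choose k : ℝ) * (A k * B (n+1-k)) := by
      intro A B
      have split : ∑ k ∈ Finset.range (n+1),
            (n.choose k : ℝ) * (A k * B (n-k+1) + B (n-k) * A (k+1))
          = (∑ k ∈ Finset.range (n+1), (n.choose k : ℝ) * (A k * B (n-k+1)))
            + ∑ k ∈ Finset.range (n+1), (n.choose k : ℝ) * (A (k+1) * B (n-k)) := by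
        rw [← Finset.sum_add_distrib]
        exact Finset.sum_congr rfl (fun k _ => by ring)
      have T1 : ∑ k ∈ Finset.range (n+1), (n.choose k : ℝ) * (A k * B (n-k+1))
          = (∑ k ∈ Finset.range (n+1), (n.choose (k+1) : ℝ) * (A (k+1) * B (n-k)))
            + A 0 * B (n+1) := by
        rw [Finset.sum_range_succ' (fun k => (n.choose k : ℝ) * (A k * B (n-k+1))) n]
        rw [Finset.sum_range_succ (fun k => (n.choose (k+1) : ℝ) * (A (k+1) * B (n-k))) n]
        simp only [Nat.choose_succ_self, Nat.cast_zero, zero_mul, add_zero,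
          Nat.choose_zero_right, Nat.cast_one, one_mul, Nat.sub_zero]
        congr 1
        refine Finset.sum_congr rfl (fun k hk => ?_)
        have hk' : k + 1 ≤ n := Finset.mem_range.1 hk
        rw [show n - (k+1) + 1 = n - k from by omega]
      have RHS : ∑ k ∈ Finset.range (n+2), ((n+1).choose k : ℝ) * (A k * B (n+1-k))
          = (∑ k ∈ Finset.range (n+1), ((n+1).choose (k+1) : ℝ) * (A (k+1) * B (n-k)))
            + A 0 * B (n+1) := by
        rw [Finset.sum_range_succ' (fun k => ((n+1).choose k : ℝ) * (A k * B (n+1-k))) (n+1)]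
        simp only [Nat.succ_sub_succ, Nat.choose_zero_right, Nat.cast_one, one_mul,
          Nat.sub_zero]
      rw [split, T1, RHS, add_right_comm]
      congr 1
      rw [← Finset.sum_add_distrib]
      refine Finset.sum_congr rfl (fun k _ => ?_)
      rw [Nat.choose_succ_succ]
      push_cast
      ring
    rw [key (fun k => iterLie F k f x) (fun k => iterLie F k g x)]

end Aux
namespace Aux
variable {E : Type*} [NormedAddCommGroup E] [NormedSpace ℝ E]
variable {F : E → E}

lemma deriv_smooth {φ : ℝ → ℝ} (hφ : ContDiff ℝ ∞ φ) : ContDiff ℝ ∞ (deriv φ) :=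
  (contDiff_infty_iff_deriv.1 hφ).2

/-- If all Lie derivatives of `f` of orders `1..n` vanish at `x`, so do those of `φ ∘ f`. -/
lemma comp_vanish (hF : ContDiff ℝ ∞ F) {φ : ℝ → ℝ} {f : E → ℝ}
    (hφ : ContDiff ℝ ∞ φ) (hf : ContDiff ℝ ∞ f) {x : E} {n : ℕ}
    (hjet : ∀ b, 1 ≤ b → b ≤ n → iterLie F b f x = 0) :
    ∀ b, 1 ≤ b → b ≤ n → iterLie F b (fun y => φ (f y)) x = 0 := by
  intro b hb1 hbn
  obtain ⟨c, rfl⟩ : ∃ c, b = c + 1 := ⟨b - 1, by omega⟩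
  rw [iterLie_succ', show lie F (fun y => φ (f y)) = fun y => deriv φ (f y) * lie F f y from
    lie_comp hφ hf]
  rw [iterLie_mul hF (f := fun y => deriv φ (f y)) (g := lie F f)
    ((deriv_smooth hφ).comp hf) (lie_smooth hF hf) c]
  apply Finset.sum_eq_zero
  intro k hk
  have hk' : k ≤ c := by have := Finset.mem_range.1 hk; omega
  have : iterLie F (c - k) (lie F f) x = iterLie F (c - k + 1) f x := by
    rw [← iterLie_succ']
  rw [this, hjet (c - k + 1) (by omega) (by omega)]
  ring

/-- Square-extraction: vanishing of `L^j (f^2)` for `j ≤ 2m` forces `L^a f = 0` for `a ≤ m`. -/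
lemma square_vanish (hF : ContDiff ℝ ∞ F) {f : E → ℝ} (hf : ContDiff ℝ ∞ f) {x : E} {m : ℕ}
    (hjet : ∀ j, j ≤ 2 * m → iterLie F j (fun y => f y * f y) x = 0) :
    ∀ a, a ≤ m → iterLie F a f x = 0 := by
  intro a
  induction a using Nat.strong_induction_on with
  | _ a ih =>
    intro ham
    have h2a := hjet (2 * a) (by omega)
    simp only [iterLie_mul hF hf hf (2 * a)] at h2a
    have hsingle : ∑ k ∈ Finset.range (2 * a + 1),
        ((2 * a).choose k : ℝ) * (iterLie F k f x * iterLie F (2 * a - k) f x)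
        = ((2 * a).choose a : ℝ) * (iterLie F a f x * iterLie F a f x) := by
      rw [Finset.sum_eq_single a]
      · rw [show 2 * a - a = a from by omega]
      · intro k hk hne
        have hk' : k ≤ 2 * a := by have := Finset.mem_range.1 hk; omega
        rcases lt_or_gt_of_ne hne with h | h
        · rw [ih k (by omega) (by omega)]; ring
        · rw [show iterLie F (2 * a - k) f x = 0 from ih (2 * a - k) (by omega) (by omega)]
          ring
      · intro h; exact absurd (Finset.mem_range.2 (by omega)) h
    rw [hsingle] at h2a
    have hpos : (0 : ℝ) < ((2 * a).choose a : ℝ) := by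
      exact_mod_cast Nat.choose_pos (by omega)
    have := mul_eq_zero.1 h2a
    rcases this with h | h
    · exact absurd h (ne_of_gt hpos)
    · exact mul_self_eq_zero.1 h

/-- Key dichotomy step. -/
lemma key_step (hF : ContDiff ℝ ∞ F) {φ : ℝ → ℝ} {r w : E → ℝ}
    (hφ : ContDiff ℝ ∞ φ) (hr : ContDiff ℝ ∞ r) (hw : ContDiff ℝ ∞ w)
    (hlr : lie F r = w) {x : E} {m : ℕ}
    (hjet : ∀ j, 1 ≤ j → j ≤ m → iterLie F j (fun y => φ (r y)) x = 0)
    (hnd : deriv φ (r x) ≠ 0 ∨ deriv (deriv φ) (r x) ≠ 0) :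
    ∀ d, 2 * d + 2 ≤ m → iterLie F d w x = 0 := by
  have hφ' : ContDiff ℝ ∞ (fun y => deriv φ (r y)) := (deriv_smooth hφ).comp hr
  have hφ'' : ContDiff ℝ ∞ (fun y => deriv (deriv φ) (r y)) :=
    (deriv_smooth (deriv_smooth hφ)).comp hr
  have e1 : lie F (fun y => φ (r y)) = fun y => deriv φ (r y) * w y := by
    rw [lie_comp hφ hr, hlr]
  have e2 : lie F (fun y => deriv φ (r y)) = fun y => deriv (deriv φ) (r y) * w y := by
    rw [lie_comp (deriv_smooth hφ) hr, hlr]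
  intro d
  induction d using Nat.strong_induction_on with
  | _ d ih =>
    intro hdm
    -- expansion of L^{j+1} (φ∘r) x for any j
    have expand : ∀ j : ℕ, iterLie F (j+1) (fun y => φ (r y)) x
        = ∑ k ∈ Finset.range (j+1),
            (j.choose k : ℝ) * (iterLie F k (fun y => deriv φ (r y)) x * iterLie F (j-k) w x) := by
      intro j
      rw [iterLie_succ', e1, iterLie_mul hF hφ' hw j]
    -- expansion of L^{c+1} (φ'∘r) x
    have expand' : ∀ c : ℕ, iterLie F (c+1) (fun y => deriv φ (r y)) x
        = ∑ e ∈ Finset.range (c+1),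
            (c.choose e : ℝ) * (iterLie F e (fun y => deriv (deriv φ) (r y)) x * iterLie F (c-e) w x) := by
      intro c
      rw [iterLie_succ', e2, iterLie_mul hF hφ'' hw c]
    by_cases hA : deriv φ (r x) = 0
    · -- degenerate case : use φ''
      have hB : deriv (deriv φ) (r x) ≠ 0 := by
        rcases hnd with h | h
        · exact absurd hA h
        · exact h
      have h0 := hjet (2*d+2) (by omega) (by omega)
      rw [show 2*d+2 = (2*d+1)+1 from rfl, expand (2*d+1)] at h0
      have hsingle : ∑ k ∈ Finset.range (2*d+2),
          ((2*d+1).choose k : ℝ) * (iterLie F k (fun y => deriv φ (r y)) x * iterLie F (2*d+1-k) w x)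
          = ((2*d+1).choose (d+1) : ℝ) *
              ((deriv (deriv φ) (r x) * iterLie F d w x) * iterLie F d w x) := by
        rw [Finset.sum_eq_single (d+1)]
        · congr 1
          rw [show 2*d+1-(d+1) = d from by omega]
          congr 1
          rw [expand' d, Finset.sum_eq_single 0]
          · simp [iterLie_zero]
          · intro e he hne
            have he' : e ≤ d := by have := Finset.mem_range.1 he; omega
            rw [show iterLie F (d - e) w x = 0 from ih (d-e) (by omega) (by omega)]
            ring
          · intro h; exact absurd (Finset.mem_range.2 (by omega)) h
        · intro k hk hne
          have hk' : k ≤ 2*d+1 := by have := Finset.mem_range.1 hk; omega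
          rcases Nat.lt_or_ge k (d+1) with h | h
          · -- k ≤ d : first factor vanishes
            rcases Nat.eq_zero_or_pos k with rfl | hkpos
            · rw [iterLie_zero]; simp [hA]
            · obtain ⟨c, rfl⟩ : ∃ c, k = c + 1 := ⟨k - 1, by omega⟩
              rw [expand' c]
              have : ∑ e ∈ Finset.range (c+1),
                  (c.choose e : ℝ) * (iterLie F e (fun y => deriv (deriv φ) (r y)) x * iterLie F (c-e) w x) = 0 := by
                apply Finset.sum_eq_zero
                intro e he
                rw [show iterLie F (c - e) w x = 0 from ih (c-e) (by omega) (by omega)]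
                ring
              rw [this]; ring
          · -- k ≥ d+2 : second factor vanishes
            rw [show iterLie F (2*d+1-k) w x = 0 from ih (2*d+1-k) (by omega) (by omega)]
            ring
        · intro h; exact absurd (Finset.mem_range.2 (by omega)) h
      rw [hsingle] at h0
      have hpos : ((2*d+1).choose (d+1) : ℝ) ≠ 0 := by
        exact_mod_cast (Nat.choose_pos (show d+1 ≤ 2*d+1 by omega)).ne'
      rcases mul_eq_zero.1 h0 with h | h
      · exact absurd h hpos
      · rcases mul_eq_zero.1 h with h | h
        · rcases mul_eq_zero.1 h with h | h
          · exact absurd h hB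
          · exact h
        · exact h
    · -- nondegenerate case : first derivative nonzero
      have h0 := hjet (d+1) (by omega) (by omega)
      rw [expand d] at h0
      have hsingle : ∑ k ∈ Finset.range (d+1),
          (d.choose k : ℝ) * (iterLie F k (fun y => deriv φ (r y)) x * iterLie F (d-k) w x)
          = deriv φ (r x) * iterLie F d w x := by
        rw [Finset.sum_eq_single 0]
        · simp [iterLie_zero]
        · intro k hk hne
          have hk' : k ≤ d := by have := Finset.mem_range.1 hk; omega
          rw [show iterLie F (d - k) w x = 0 from ih (d-k) (by omega) (by omega)]
          ring
        · intro h; exact absurd (Finset.mem_range.2 (by omega)) h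
      rw [hsingle] at h0
      rcases mul_eq_zero.1 h0 with h | h
      · exact absurd h hA
      · exact h
end Aux
namespace Aux

variable {N : ℕ}

/-- momentum projection, `0` out of range -/
def PLM (N : ℕ) (j : ℕ) : OscState N →L[ℝ] ℝ :=
  if h : j < N then (ContinuousLinearMap.proj (⟨j, h⟩ : Fin N)).comp
    (ContinuousLinearMap.fst ℝ (Fin N → ℝ) (Fin N → ℝ)) else 0

/-- position projection, `0` out of range -/
def QLM (N : ℕ) (j : ℕ) : OscState N →L[ℝ] ℝ :=
  if h : j < N then (ContinuousLinearMap.proj (⟨j, h⟩ : Fin N)).comp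
    (ContinuousLinearMap.snd ℝ (Fin N → ℝ) (Fin N → ℝ)) else 0

def RLM (N : ℕ) (j : ℕ) : OscState N →L[ℝ] ℝ := QLM N j - QLM N (j+1)

def WLM (N : ℕ) (j : ℕ) : OscState N →L[ℝ] ℝ := PLM N j - PLM N (j+1)

lemma PLM_apply (j : ℕ) (h : j < N) (x : OscState N) : PLM N j x = x.1 ⟨j, h⟩ := by
  simp [PLM, dif_pos h]

lemma PLM_apply_of_ge (j : ℕ) (h : N ≤ j) (x : OscState N) : PLM N j x = 0 := by
  simp [PLM, dif_neg (by omega : ¬ j < N)]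

lemma QLM_apply (x : OscState N) (j : ℕ) : QLM N j x = qc x j := by
  by_cases h : j < N
  · simp [QLM, dif_pos h, qc]
  · simp [QLM, dif_neg h, qc]

lemma RLM_apply (x : OscState N) (j : ℕ) : RLM N j x = qc x j - qc x (j+1) := by
  simp [RLM, QLM_apply]

lemma WLM_apply (x : OscState N) (j : ℕ) : WLM N j x = PLM N j x - PLM N (j+1) x := by
  simp [WLM]

lemma clm_smooth (L : OscState N →L[ℝ] ℝ) : ContDiff ℝ ∞ (⇑L) := L.contDiff

lemma lie_clm (F : OscState N → OscState N) (L : OscState N →L[ℝ] ℝ) :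
    lie F (⇑L) = fun x => L (F x) := by
  funext x
  simp [lie, L.fderiv]

variable (U V : ℕ → ℝ → ℝ)

lemma lie_QLM (j : ℕ) : lie (FOsc N U V) (⇑(QLM N j)) = ⇑(PLM N j) := by
  rw [lie_clm]
  funext x
  by_cases h : j < N
  · rw [PLM_apply j h, QLM_apply]
    simp [qc, dif_pos h, FOsc]
  · rw [PLM_apply_of_ge j (by omega), QLM_apply]
    simp [qc, dif_neg h]

lemma lie_RLM (j : ℕ) : lie (FOsc N U V) (⇑(RLM N j)) = ⇑(WLM N j) := by
  have : (⇑(RLM N j) : OscState N → ℝ) = fun x => QLM N j x - QLM N (j+1) x := by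
    funext x; simp [RLM]
  rw [show (⇑(RLM N j) : OscState N → ℝ) = ⇑(QLM N j - QLM N (j+1)) from rfl]
  rw [lie_clm]
  funext x
  have h1 := congrFun (lie_QLM U V (j := j)) x
  have h2 := congrFun (lie_QLM U V (j := j+1)) x
  rw [lie_clm] at h1 h2
  simp only [ContinuousLinearMap.sub_apply, WLM_apply]
  rw [← h1, ← h2]

lemma lie_PLM (j : ℕ) (hj : j < N) :
    lie (FOsc N U V) (⇑(PLM N j))
      = fun x => -(if j = 0 then PLM N j x else 0) - deriv (U j) (QLM N j x)
          + (if j = 0 then 0 else deriv (V (j-1)) (RLM N (j-1) x))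
          - deriv (V j) (RLM N j x) := by
  rw [lie_clm]
  funext x
  rw [PLM_apply j hj]
  show (FOsc N U V x).1 ⟨j, hj⟩ = _
  simp only [FOsc]
  by_cases h0 : j = 0
  · subst h0
    simp only [if_pos rfl, PLM_apply 0 hj, QLM_apply, RLM_apply, qc, dif_pos hj]
    norm_num
  · simp only [if_neg h0, QLM_apply, RLM_apply, qc, dif_pos hj]
    have hj1 : j - 1 + 1 = j := by omega
    have hj1N : j - 1 < N := by omega
    rw [hj1]
    simp [dif_pos hj1N, dif_pos hj]

end Aux
namespace Aux
variable {N : ℕ} {U V : ℕ → ℝ → ℝ}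

section Smooth
lemma V_smooth (hVsm : ∀ i < N - 1, ContDiff ℝ (⊤ : ℕ∞) (V i))
    (hVtop : ∀ i, N - 1 ≤ i → V i = fun _ => 0) (j : ℕ) : ContDiff ℝ ∞ (V j) := by
  by_cases h : j < N - 1
  · exact (hVsm j h).of_le (by simp)
  · rw [hVtop j (by omega)]; exact contDiff_const

lemma dV_smooth (hVsm : ∀ i < N - 1, ContDiff ℝ (⊤ : ℕ∞) (V i))
    (hVtop : ∀ i, N - 1 ≤ i → V i = fun _ => 0) (j : ℕ) : ContDiff ℝ ∞ (deriv (V j)) :=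
  deriv_smooth (V_smooth hVsm hVtop j)

lemma ddV_smooth (hVsm : ∀ i < N - 1, ContDiff ℝ (⊤ : ℕ∞) (V i))
    (hVtop : ∀ i, N - 1 ≤ i → V i = fun _ => 0) (j : ℕ) : ContDiff ℝ ∞ (deriv (deriv (V j))) :=
  deriv_smooth (dV_smooth hVsm hVtop j)

lemma dU_smooth (hUsm : ∀ i < N, ContDiff ℝ (⊤ : ℕ∞) (U i)) (j : ℕ) (hj : j < N) : ContDiff ℝ ∞ (deriv (U j)) :=
  deriv_smooth ((hUsm j hj).of_le (by simp))

lemma dV_last (hVtop : ∀ i, N - 1 ≤ i → V i = fun _ => 0) : deriv (V (N-1)) = fun _ => (0:ℝ) := by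
  rw [hVtop (N-1) le_rfl]
  funext t; simp

/-- The right-hand side appearing in `lie_PLM` is smooth. -/
lemma force_smooth (hUsm : ∀ i < N, ContDiff ℝ (⊤ : ℕ∞) (U i))
    (hVsm : ∀ i < N - 1, ContDiff ℝ (⊤ : ℕ∞) (V i))
    (hVtop : ∀ i, N - 1 ≤ i → V i = fun _ => 0) (j : ℕ) (hj : j < N) :
    ContDiff ℝ ∞ (fun x : OscState N =>
      -(if j = 0 then PLM N j x else 0) - deriv (U j) (QLM N j x)
        + (if j = 0 then 0 else deriv (V (j-1)) (RLM N (j-1) x))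
        - deriv (V j) (RLM N j x)) := by
  have h1 : ContDiff ℝ ∞ (fun x : OscState N => -(if j = 0 then PLM N j x else 0)) := by
    by_cases h0 : j = 0
    · simp only [if_pos h0]; exact (clm_smooth _).neg
    · simp only [if_neg h0]; exact contDiff_const.neg
  have h2 : ContDiff ℝ ∞ (fun x : OscState N => deriv (U j) (QLM N j x)) :=
    (dU_smooth hUsm j hj).comp (clm_smooth _)
  have h3 : ContDiff ℝ ∞ (fun x : OscState N =>
      if j = 0 then 0 else deriv (V (j-1)) (RLM N (j-1) x)) := by
    by_cases h0 : j = 0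
    · simp only [if_pos h0]; exact contDiff_const
    · simp only [if_neg h0]
      exact (dV_smooth hVsm hVtop (j-1)).comp (clm_smooth _)
  have h4 : ContDiff ℝ ∞ (fun x : OscState N => deriv (V j) (RLM N j x)) :=
    (dV_smooth hVsm hVtop j).comp (clm_smooth _)
  exact ((h1.sub h2).add h3).sub h4

lemma FOsc_smooth (hUsm : ∀ i < N, ContDiff ℝ (⊤ : ℕ∞) (U i))
    (hVsm : ∀ i < N - 1, ContDiff ℝ (⊤ : ℕ∞) (V i))
    (hVtop : ∀ i, N - 1 ≤ i → V i = fun _ => 0) : ContDiff ℝ ∞ (FOsc N U V) := by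
  have h2 : ContDiff ℝ ∞ (fun x : OscState N => (FOsc N U V x).2) := contDiff_fst
  have h1 : ContDiff ℝ ∞ (fun x : OscState N => (FOsc N U V x).1) := by
    apply contDiff_pi.2
    intro i
    have hident : (fun x : OscState N => (FOsc N U V x).1 i)
        = fun x => -(if (i:ℕ) = 0 then PLM N i x else 0) - deriv (U i) (QLM N i x)
            + (if (i:ℕ) = 0 then 0 else deriv (V ((i:ℕ)-1)) (RLM N ((i:ℕ)-1) x))
            - deriv (V i) (RLM N (i:ℕ) x) := by
      have := lie_PLM U V (i:ℕ) i.2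
      rw [lie_clm] at this
      have h' : ∀ x : OscState N, PLM N (i:ℕ) (FOsc N U V x) = (FOsc N U V x).1 i := by
        intro x
        rw [PLM_apply (i:ℕ) i.2]
      funext x
      rw [← h' x]
      exact congrFun this x
    rw [hident]
    exact force_smooth hUsm hVsm hVtop (i:ℕ) i.2
  exact h1.prodMk h2
end Smooth
end Aux
namespace Aux
variable {N : ℕ} {U V : ℕ → ℝ → ℝ}

lemma telescope_sum (M : ℕ) (p uu vv : ℕ → ℝ) (hlast : vv M = 0) :
    (∑ j ∈ Finset.range (M+1), p j * (-(if j = 0 then p j else 0) - uu j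
        + (if j = 0 then 0 else vv (j-1)) - vv j))
      + ∑ j ∈ Finset.range (M+1), uu j * p j
      + ∑ j ∈ Finset.range M, vv j * (p j - p (j+1)) = -(p 0)^2 := by
  have expand : ∀ j ∈ Finset.range (M+1),
      p j * (-(if j = 0 then p j else 0) - uu j + (if j = 0 then 0 else vv (j-1)) - vv j)
        + uu j * p j
      = -(if j = 0 then p j * p j else 0) + (if j = 0 then 0 else p j * vv (j-1))
          - p j * vv j := by
    intro j _
    by_cases h0 : j = 0 <;> simp only [h0, if_pos, if_neg, if_true, if_false] <;> ring
  have comb : (∑ j ∈ Finset.range (M+1), p j * (-(if j = 0 then p j else 0) - uu j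
        + (if j = 0 then 0 else vv (j-1)) - vv j))
      + ∑ j ∈ Finset.range (M+1), uu j * p j
      = ∑ j ∈ Finset.range (M+1),
          (-(if j = 0 then p j * p j else 0) + (if j = 0 then 0 else p j * vv (j-1))
            - p j * vv j) := by
    rw [← Finset.sum_add_distrib]
    exact Finset.sum_congr rfl expand
  rw [comb]
  have split : ∑ j ∈ Finset.range (M+1),
      (-(if j = 0 then p j * p j else 0) + (if j = 0 then 0 else p j * vv (j-1))
        - p j * vv j)
      = (∑ j ∈ Finset.range (M+1), -(if j = 0 then p j * p j else 0))
        + (∑ j ∈ Finset.range (M+1), (if j = 0 then 0 else p j * vv (j-1)))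
        - ∑ j ∈ Finset.range (M+1), p j * vv j := by
    rw [Finset.sum_sub_distrib, Finset.sum_add_distrib]
  rw [split]
  have Sa : ∑ j ∈ Finset.range (M+1), -(if j = 0 then p j * p j else 0) = -(p 0 * p 0) := by
    rw [Finset.sum_neg_distrib]
    rw [Finset.sum_ite_eq' (Finset.range (M+1)) 0 (fun j => p j * p j)]
    simp [Finset.mem_range]
  have Sb : ∑ j ∈ Finset.range (M+1), (if j = 0 then 0 else p j * vv (j-1))
      = ∑ j ∈ Finset.range M, p (j+1) * vv j := by
    rw [Finset.sum_range_succ' (fun j => if j = 0 then 0 else p j * vv (j-1)) M]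
    simp
  have Sc : ∑ j ∈ Finset.range (M+1), p j * vv j = ∑ j ∈ Finset.range M, p j * vv j := by
    rw [Finset.sum_range_succ, hlast]
    ring
  rw [Sa, Sb, Sc]
  have E : ∑ j ∈ Finset.range M, vv j * (p j - p (j+1))
      = (∑ j ∈ Finset.range M, p j * vv j) - ∑ j ∈ Finset.range M, p (j+1) * vv j := by
    rw [← Finset.sum_sub_distrib]
    exact Finset.sum_congr rfl (fun j _ => by ring)
  rw [E]
  ring
end Aux
namespace Aux
variable {N : ℕ} {U V : ℕ → ℝ → ℝ}

lemma lie_HamO (hN : 2 ≤ N) (hUsm : ∀ i < N, ContDiff ℝ (⊤ : ℕ∞) (U i))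
    (hVsm : ∀ i < N - 1, ContDiff ℝ (⊤ : ℕ∞) (V i))
    (hVtop : ∀ i, N - 1 ≤ i → V i = fun _ => 0) :
    lie (FOsc N U V) (HamO N U V) = fun x => -(PLM N 0 x)^2 := by
  set F := FOsc N U V with hF
  -- reshape the Hamiltonian
  have hH : HamO N U V = fun y : OscState N =>
      (∑ i : Fin N, PLM N (i:ℕ) y * PLM N (i:ℕ) y * 2⁻¹)
        + ((∑ i : Fin N, U i (QLM N (i:ℕ) y))
          + ∑ i ∈ Finset.range (N-1), V i (RLM N i y)) := by
    funext y
    unfold HamO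
    have e1 : ∀ i : Fin N, (y.1 i)^2/2 = PLM N (i:ℕ) y * PLM N (i:ℕ) y * 2⁻¹ := by
      intro i
      rw [PLM_apply (i:ℕ) i.2]
      simp only [Fin.eta]
      ring
    have e2 : ∀ i : Fin N, U i (y.2 i) = U i (QLM N (i:ℕ) y) := by
      intro i
      rw [QLM_apply]
      simp [qc, dif_pos i.2]
    have e3 : ∀ i ∈ Finset.range (N-1), V i (qc y i - qc y (i+1)) = V i (RLM N i y) := by
      intro i _
      rw [RLM_apply]
    rw [Finset.sum_congr rfl (fun i _ => e1 i), Finset.sum_congr rfl (fun i _ => e2 i),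
      Finset.sum_congr rfl e3]
    ring
  have hUs : ∀ i : Fin N, ContDiff ℝ ∞ (fun y : OscState N => U i (QLM N (i:ℕ) y)) :=
    fun i => ((hUsm i i.2).of_le (by simp)).comp (clm_smooth _)
  have hVs : ∀ i : ℕ, ContDiff ℝ ∞ (fun y : OscState N => V i (RLM N i y)) :=
    fun i => (V_smooth hVsm hVtop i).comp (clm_smooth _)
  have hPs : ∀ i : Fin N, ContDiff ℝ ∞
      (fun y : OscState N => PLM N (i:ℕ) y * PLM N (i:ℕ) y * 2⁻¹) :=
    fun i => ((clm_smooth _).mul (clm_smooth _)).mul contDiff_const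
  have hS1 : ContDiff ℝ ∞ (fun y : OscState N =>
      ∑ i : Fin N, PLM N (i:ℕ) y * PLM N (i:ℕ) y * 2⁻¹) :=
    ContDiff.sum (fun i _ => hPs i)
  have hS2 : ContDiff ℝ ∞ (fun y : OscState N => ∑ i : Fin N, U i (QLM N (i:ℕ) y)) :=
    ContDiff.sum (fun i _ => hUs i)
  have hS3 : ContDiff ℝ ∞ (fun y : OscState N => ∑ i ∈ Finset.range (N-1), V i (RLM N i y)) :=
    ContDiff.sum (fun i _ => hVs i)
  rw [hH, lie_add hS1 (hS2.add hS3), lie_add hS2 hS3,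
    lie_sum Finset.univ _ (fun i _ => hPs i), lie_sum Finset.univ _ (fun i _ => hUs i),
    lie_sum (Finset.range (N-1)) _ (fun i _ => hVs i)]
  -- compute each piece
  have hgP : ∀ i : Fin N, lie F (fun y => PLM N (i:ℕ) y * PLM N (i:ℕ) y * 2⁻¹)
      = fun x => PLM N (i:ℕ) x * PLM N (i:ℕ) (F x) := by
    intro i
    rw [lie_mul ((clm_smooth _).mul (clm_smooth _)) (contDiff_const (c := (2:ℝ)⁻¹)),
      lie_mul (clm_smooth (PLM N (i:ℕ))) (clm_smooth (PLM N (i:ℕ))),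
      lie_const, lie_clm]
    funext x
    ring
  have hgU : ∀ i : Fin N, lie F (fun y => U i (QLM N (i:ℕ) y))
      = fun x => deriv (U i) (QLM N (i:ℕ) x) * PLM N (i:ℕ) x := by
    intro i
    rw [lie_comp ((hUsm i i.2).of_le (by simp)) (clm_smooth _), lie_QLM]
  have hgV : ∀ i : ℕ, lie F (fun y => V i (RLM N i y))
      = fun x => deriv (V i) (RLM N i x) * WLM N i x := by
    intro i
    rw [lie_comp (V_smooth hVsm hVtop i) (clm_smooth _), lie_RLM]
  funext x
  simp only []
  rw [Finset.sum_congr rfl (fun i _ => congrFun (hgP i) x),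
    Finset.sum_congr rfl (fun i _ => congrFun (hgU i) x),
    Finset.sum_congr rfl (fun i _ => congrFun (hgV i) x)]
  -- now numeric telescoping
  have hdot : ∀ j, j < N → PLM N j (F x)
      = -(if j = 0 then PLM N j x else 0) - deriv (U j) (QLM N j x)
        + (if j = 0 then 0 else deriv (V (j-1)) (RLM N (j-1) x))
        - deriv (V j) (RLM N j x) := by
    intro j hj
    have := congrFun (lie_PLM U V j hj) x
    rw [lie_clm] at this
    exact this
  have c1 : (∑ i : Fin N, PLM N (i:ℕ) x * PLM N (i:ℕ) (F x))
      = ∑ j ∈ Finset.range N, PLM N j x * (-(if j = 0 then PLM N j x else 0)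
          - deriv (U j) (QLM N j x)
          + (if j = 0 then 0 else deriv (V (j-1)) (RLM N (j-1) x))
          - deriv (V j) (RLM N j x)) := by
    rw [← Fin.sum_univ_eq_sum_range (fun j => PLM N j x * (-(if j = 0 then PLM N j x else 0)
          - deriv (U j) (QLM N j x)
          + (if j = 0 then 0 else deriv (V (j-1)) (RLM N (j-1) x))
          - deriv (V j) (RLM N j x))) N]
    exact Finset.sum_congr rfl (fun i _ => by rw [hdot (i:ℕ) i.2])
  have c2 : (∑ i : Fin N, deriv (U (i:ℕ)) (QLM N (i:ℕ) x) * PLM N (i:ℕ) x)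
      = ∑ j ∈ Finset.range N, deriv (U j) (QLM N j x) * PLM N j x :=
    Fin.sum_univ_eq_sum_range (fun j => deriv (U j) (QLM N j x) * PLM N j x) N
  have c3 : (∑ i ∈ Finset.range (N-1), deriv (V i) (RLM N i x) * WLM N i x)
      = ∑ j ∈ Finset.range (N-1), deriv (V j) (RLM N j x) * (PLM N j x - PLM N (j+1) x) :=
    Finset.sum_congr rfl (fun i _ => by rw [WLM_apply])
  rw [c1, c2, c3]
  have hNeq : N = (N-1) + 1 := by omega
  have hlast : deriv (V (N-1)) (RLM N (N-1) x) = 0 := by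
    rw [dV_last hVtop]
  rw [show (∑ j ∈ Finset.range N, PLM N j x * (-(if j = 0 then PLM N j x else 0)
          - deriv (U j) (QLM N j x)
          + (if j = 0 then 0 else deriv (V (j-1)) (RLM N (j-1) x))
          - deriv (V j) (RLM N j x)))
      = ∑ j ∈ Finset.range ((N-1)+1), PLM N j x * (-(if j = 0 then PLM N j x else 0)
          - deriv (U j) (QLM N j x)
          + (if j = 0 then 0 else deriv (V (j-1)) (RLM N (j-1) x))
          - deriv (V j) (RLM N j x)) from by rw [← hNeq],
    show (∑ j ∈ Finset.range N, deriv (U j) (QLM N j x) * PLM N j x)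
      = ∑ j ∈ Finset.range ((N-1)+1), deriv (U j) (QLM N j x) * PLM N j x
      from by rw [← hNeq]]
  rw [← add_assoc]
  exact telescope_sum (N-1) (fun j => PLM N j x) (fun j => deriv (U j) (QLM N j x))
    (fun j => deriv (V j) (RLM N j x)) hlast
end Aux
namespace Aux
variable {N : ℕ} {U V : ℕ → ℝ → ℝ}

lemma chain (hN : 2 ≤ N) (hUsm : ∀ i < N, ContDiff ℝ (⊤ : ℕ∞) (U i))
    (hVsm : ∀ i < N - 1, ContDiff ℝ (⊤ : ℕ∞) (V i))
    (hVtop : ∀ i, N - 1 ≤ i → V i = fun _ => 0)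
    (hVnd : ∀ i < N - 1, ∀ t : ℝ,
      deriv (deriv (V i)) t ≠ 0 ∨ deriv (deriv (deriv (V i))) t ≠ 0)
    (x : OscState N)
    (hjets : ∀ j, 1 ≤ j → j ≤ 3 * 2 ^ (N + 1) - 5 →
      iterLie (FOsc N U V) j (HamO N U V) x = 0) :
    ∀ k, k < N → ∀ a, a ≤ 3 * 2 ^ (N - k) - 3 →
      iterLie (FOsc N U V) a (⇑(PLM N k)) x = 0 := by
  set F := FOsc N U V with hFdef
  have hFs : ContDiff ℝ ∞ F := FOsc_smooth hUsm hVsm hVtop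
  have h2N : 1 ≤ 2 ^ N := Nat.one_le_two_pow
  intro k
  induction k using Nat.strong_induction_on with
  | _ k ih =>
    intro hkN a ha
    rcases Nat.eq_zero_or_pos k with rfl | hkpos
    · -- base case : square extraction from lie H = -(p_0)^2
      have hsq : ∀ j, j ≤ 2 * (3 * 2 ^ N - 3) →
          iterLie F j (fun y => PLM N 0 y * PLM N 0 y) x = 0 := by
        intro j hj
        have hid : (fun y => PLM N 0 y * PLM N 0 y)
            = fun y => -(lie F (HamO N U V) y) := by
          rw [lie_HamO hN hUsm hVsm hVtop]
          funext y
          ring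
        have hsm : ContDiff ℝ ∞ (lie F (HamO N U V)) := by
          rw [lie_HamO hN hUsm hVsm hVtop,
            show (fun x : OscState N => -(PLM N 0 x)^2)
              = fun x => -(PLM N 0 x * PLM N 0 x) from by funext y; ring]
          exact ((clm_smooth _).mul (clm_smooth _)).neg
        rw [hid, iterLie_neg hFs hsm j]
        have hthis : iterLie F j (lie F (HamO N U V)) x = iterLie F (j+1) (HamO N U V) x := by
          rw [← iterLie_succ']
        show -(iterLie F j (lie F (HamO N U V)) x) = 0
        rw [hthis, hjets (j+1) (by omega) (by
          have e : 2 ^ (N+1) = 2 * 2 ^ N := by rw [pow_succ]; ring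
          omega)]
        ring
      exact square_vanish hFs (clm_smooth _) hsq a (by simpa using ha)
    · -- inductive step : k = k'+1
      obtain ⟨k', rfl⟩ : ∃ k'', k = k'' + 1 := ⟨k - 1, by omega⟩
      have hk'N : k' < N := by omega
      have hk'N1 : k' < N - 1 := by omega
      -- arithmetic
      have hNk : N - k' = (N - (k'+1)) + 1 := by omega
      have h2t : 1 ≤ 2 ^ (N - (k'+1)) := Nat.one_le_two_pow
      have hpow : 2 ^ (N - k') = 2 * 2 ^ (N - (k'+1)) := by
        rw [hNk, pow_succ]; ring
      set n : ℕ := 3 * 2 ^ (N - k') - 3 with hn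
      set n' : ℕ := 3 * 2 ^ (N - (k'+1)) - 3 with hn'
      have hnn' : 2 * n' + 2 = n - 1 := by omega
      have hn9 : 3 ≤ n := by omega
      -- jets of P_{k'} from IH
      have hP : ∀ a ≤ n, iterLie F a (⇑(PLM N k')) x = 0 := fun a ha =>
        ih k' (by omega) hk'N a (by omega)
      -- jets of Q_{k'}
      have hQ : ∀ b, 1 ≤ b → b ≤ n + 1 → iterLie F b (⇑(QLM N k')) x = 0 := by
        intro b hb1 hb2
        obtain ⟨c, rfl⟩ : ∃ c, b = c + 1 := ⟨b - 1, by omega⟩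
        rw [iterLie_succ', lie_QLM]
        exact hP c (by omega)
      -- jets of R_{k'-1} (only needed when k' ≥ 1)
      have hR : 1 ≤ k' → ∀ b, 1 ≤ b → b ≤ n - 1 →
          iterLie F b (⇑(RLM N (k'-1))) x = 0 := by
        intro hk1 b hb1 hb2
        obtain ⟨c, rfl⟩ : ∃ c, b = c + 1 := ⟨b - 1, by omega⟩
        rw [iterLie_succ', lie_RLM,
          show (⇑(WLM N (k'-1)) : OscState N → ℝ)
            = fun y => PLM N (k'-1) y - PLM N (k'-1+1) y from by
              funext y; rw [WLM_apply],
          iterLie_sub hFs (clm_smooth _) (clm_smooth _) c]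
        have hprev : iterLie F c (⇑(PLM N (k'-1))) x = 0 := by
          apply ih (k'-1) (by omega) (by omega) c
          have hmono : 2 ^ (N - k') ≤ 2 ^ (N - (k'-1)) :=
            Nat.pow_le_pow_right (by omega) (by omega)
          omega
        show iterLie F c (⇑(PLM N (k'-1))) x - iterLie F c (⇑(PLM N (k'-1+1))) x = 0
        rw [hprev, show k'-1+1 = k' from by omega, hP c (by omega)]
        ring
      -- jets of h := deriv (V k') ∘ R_{k'}
      have hh : ∀ j, 1 ≤ j → j ≤ n - 1 →
          iterLie F j (fun y => deriv (V k') (RLM N k' y)) x = 0 := by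
        intro j hj1 hj2
        have hident : (fun y => deriv (V k') (RLM N k' y))
            = fun y => (-(lie F (⇑(PLM N k')) y) + -(if k' = 0 then PLM N k' y else 0)
                + -(deriv (U k') (QLM N k' y)))
                + (if k' = 0 then 0 else deriv (V (k'-1)) (RLM N (k'-1) y)) := by
          rw [lie_PLM U V k' hk'N]
          funext y
          ring
        have hsm1 : ContDiff ℝ ∞ (lie F (⇑(PLM N k'))) := by
          rw [lie_PLM U V k' hk'N]
          exact force_smooth hUsm hVsm hVtop k' hk'N
        have hsm2 : ContDiff ℝ ∞ (fun y : OscState N => if k' = 0 then PLM N k' y else 0) := by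
          by_cases h0 : k' = 0
          · simp only [if_pos h0]; exact clm_smooth _
          · simp only [if_neg h0]; exact contDiff_const
        have hsm3 : ContDiff ℝ ∞ (fun y : OscState N => deriv (U k') (QLM N k' y)) :=
          (dU_smooth hUsm k' hk'N).comp (clm_smooth _)
        have hsm4 : ContDiff ℝ ∞ (fun y : OscState N =>
            if k' = 0 then 0 else deriv (V (k'-1)) (RLM N (k'-1) y)) := by
          by_cases h0 : k' = 0
          · simp only [if_pos h0]; exact contDiff_const
          · simp only [if_neg h0]
            exact (dV_smooth hVsm hVtop (k'-1)).comp (clm_smooth _)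
        have e1 : iterLie F j (lie F (⇑(PLM N k'))) x = 0 := by
          rw [← iterLie_succ']
          exact hP (j+1) (by omega)
        have e2 : iterLie F j (fun y : OscState N => if k' = 0 then PLM N k' y else 0) x = 0 := by
          by_cases h0 : k' = 0
          · simp only [if_pos h0]
            exact hP j (by omega)
          · simp only [if_neg h0]
            exact congrFun (iterLie_const 0 j (by omega)) x
        have e3 : iterLie F j (fun y => deriv (U k') (QLM N k' y)) x = 0 :=
          comp_vanish hFs (dU_smooth hUsm k' hk'N) (clm_smooth _)
            (fun b hb1 hb2 => hQ b hb1 (by omega)) j hj1 hj2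
        have e4 : iterLie F j (fun y : OscState N =>
            if k' = 0 then 0 else deriv (V (k'-1)) (RLM N (k'-1) y)) x = 0 := by
          by_cases h0 : k' = 0
          · simp only [if_pos h0]
            exact congrFun (iterLie_const 0 j (by omega)) x
          · simp only [if_neg h0]
            exact comp_vanish hFs (dV_smooth hVsm hVtop (k'-1)) (clm_smooth _)
              (fun b hb1 hb2 => hR (by omega) b hb1 hb2) j hj1 hj2
        rw [hident,
          iterLie_add hFs ((hsm1.neg.add hsm2.neg).add hsm3.neg) hsm4 j,
          iterLie_add hFs (hsm1.neg.add hsm2.neg) hsm3.neg j,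
          iterLie_add hFs hsm1.neg hsm2.neg j,
          iterLie_neg hFs hsm1 j, iterLie_neg hFs hsm2 j, iterLie_neg hFs hsm3 j]
        simp only [e1, e2, e3, e4]
        norm_num
      -- key dichotomy step : jets of w = p_{k'} - p_{k'+1}
      have hW : ∀ d, d ≤ n' → iterLie F d (⇑(WLM N k')) x = 0 := by
        intro d hd
        exact key_step hFs (dV_smooth hVsm hVtop k') (clm_smooth (RLM N k'))
          (clm_smooth (WLM N k')) (lie_RLM U V k') hh
          (hVnd k' hk'N1 (RLM N k' x)) d (by omega)
      -- conclude jets of p_{k'+1}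
      have hid : (⇑(PLM N (k'+1)) : OscState N → ℝ)
          = fun y => PLM N k' y - WLM N k' y := by
        funext y
        rw [WLM_apply]
        ring
      rw [hid, iterLie_sub hFs (clm_smooth _) (clm_smooth _) a]
      have hmono : n' ≤ n := by
        omega
      show iterLie F a (⇑(PLM N k')) x - iterLie F a (⇑(WLM N k')) x = 0
      rw [hP a (by omega), hW a ha]
      ring
end Aux
namespace Aux
variable {N : ℕ} {V : ℕ → ℝ → ℝ}

/-- A uniform bound on `V'` on half-lines, from convexity at infinity. -/
lemma Vprime_bound (hN : 2 ≤ N) (hVsm : ∀ i < N - 1, ContDiff ℝ (⊤ : ℕ∞) (V i))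
    (hVtop : ∀ i, N - 1 ≤ i → V i = fun _ => 0)
    {R : ℝ} (hR : 0 ≤ R)
    (hVconv : ∀ i < N - 1, ∀ t : ℝ, R ≤ |t| → 0 < deriv (deriv (V i)) t) :
    ∃ C : ℝ, 0 ≤ C ∧ ∀ k < N - 1,
      (∀ s : ℝ, s ≤ 0 → deriv (V k) s ≤ C) ∧ (∀ s : ℝ, 0 ≤ s → -C ≤ deriv (V k) s) := by
  have hper : ∀ k, k < N - 1 → ∃ C : ℝ, 0 ≤ C ∧
      (∀ s : ℝ, s ≤ 0 → deriv (V k) s ≤ C) ∧ (∀ s : ℝ, 0 ≤ s → -C ≤ deriv (V k) s) := by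
    intro k hk
    have hcont : ContinuousOn (deriv (V k)) (Set.Icc (-R) R) :=
      ((dV_smooth hVsm hVtop k).continuous).continuousOn
    obtain ⟨C0, hC0⟩ := (isCompact_Icc (a := -R) (b := R)).exists_bound_of_continuousOn hcont
    refine ⟨max C0 0, le_max_right _ _, ?_, ?_⟩
    · -- s ≤ 0
      intro s hs
      by_cases hsR : -R ≤ s
      · have := hC0 s ⟨hsR, by linarith⟩
        rw [Real.norm_eq_abs] at this
        have := abs_le.1 this
        exact le_trans this.2 (le_max_left _ _)
      · -- s < -R : use monotonicity on Iic (-R)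
        push_neg at hsR
        have hmono : StrictMonoOn (deriv (V k)) (Set.Iic (-R)) := by
          apply strictMonoOn_of_deriv_pos (convex_Iic (-R))
            ((dV_smooth hVsm hVtop k).continuous).continuousOn
          intro t ht
          rw [interior_Iic] at ht
          exact hVconv k hk t (by rw [abs_of_nonpos (by simp at ht; linarith)]; simp at ht; linarith)
        have h1 : deriv (V k) s < deriv (V k) (-R) :=
          hmono (by simpa using hsR.le) (by simp) hsR
        have h2 := hC0 (-R) ⟨le_refl _, by linarith⟩
        rw [Real.norm_eq_abs] at h2
        have h2' := (abs_le.1 h2).2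
        have := le_max_left C0 (0:ℝ)
        linarith
    · -- 0 ≤ s
      intro s hs
      by_cases hsR : s ≤ R
      · have := hC0 s ⟨by linarith, hsR⟩
        rw [Real.norm_eq_abs] at this
        have h' := (abs_le.1 this).1
        have := le_max_left C0 (0:ℝ)
        linarith
      · push_neg at hsR
        have hmono : StrictMonoOn (deriv (V k)) (Set.Ici R) := by
          apply strictMonoOn_of_deriv_pos (convex_Ici R)
            ((dV_smooth hVsm hVtop k).continuous).continuousOn
          intro t ht
          rw [interior_Ici] at ht
          exact hVconv k hk t (by rw [abs_of_nonneg (by simp at ht; linarith)]; simp at ht; linarith)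
        have h1 : deriv (V k) R < deriv (V k) s :=
          hmono (by simp) (by simpa using hsR.le) hsR
        have h2 := hC0 R ⟨by linarith, le_refl _⟩
        rw [Real.norm_eq_abs] at h2
        have h2' := (abs_le.1 h2).1
        have := le_max_left C0 (0:ℝ)
        linarith
  -- combine over finitely many k
  have hne : (Finset.range (N-1)).Nonempty := ⟨0, Finset.mem_range.2 (by omega)⟩
  have hchoice : ∀ k : ℕ, ∃ C : ℝ, 0 ≤ C ∧ (k < N - 1 →
      (∀ s : ℝ, s ≤ 0 → deriv (V k) s ≤ C) ∧ (∀ s : ℝ, 0 ≤ s → -C ≤ deriv (V k) s)) := by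
    intro k
    by_cases hk : k < N - 1
    · obtain ⟨C, hC0, h1, h2⟩ := hper k hk
      exact ⟨C, hC0, fun _ => ⟨h1, h2⟩⟩
    · exact ⟨0, le_refl _, fun h => absurd h hk⟩
  choose Cf hCf0 hCf using hchoice
  refine ⟨(Finset.range (N-1)).sup' hne Cf, ?_, ?_⟩
  · obtain ⟨k, hk⟩ := hne
    exact le_trans (hCf0 k) (Finset.le_sup' Cf hk)
  · intro k hk
    have hle : Cf k ≤ (Finset.range (N-1)).sup' hne Cf :=
      Finset.le_sup' Cf (Finset.mem_range.2 hk)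
    obtain ⟨h1, h2⟩ := hCf k hk
    exact ⟨fun s hs => le_trans (h1 s hs) hle, fun s hs => le_trans (by linarith [h2 s hs] : -((Finset.range (N-1)).sup' hne Cf) ≤ -Cf k) (h2 s hs)⟩
end Aux

theorem stmt19 (N : ℕ) (hN : 2 ≤ N) (U V : ℕ → ℝ → ℝ)
    (hUsm : ∀ i < N, ContDiff ℝ (⊤ : ℕ∞) (U i)) (hVsm : ∀ i < N - 1, ContDiff ℝ (⊤ : ℕ∞) (V i))
    (hVtop : ∀ i, N - 1 ≤ i → V i = fun _ => 0)
    (R : ℝ) (hR : 0 ≤ R)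
    (hVconv : ∀ i < N - 1, ∀ x : ℝ, R ≤ |x| → 0 < deriv (deriv (V i)) x)
    (hUtop : ∀ i < N, Filter.Tendsto (deriv (U i)) Filter.atTop Filter.atTop)
    (hUbot : ∀ i < N, Filter.Tendsto (deriv (U i)) Filter.atBot Filter.atBot)
    (hVnd : ∀ i < N - 1, ∀ x : ℝ,
      deriv (deriv (V i)) x ≠ 0 ∨ deriv (deriv (deriv (V i))) x ≠ 0) :
    ∃ K : Set (OscState N), Bornology.IsBounded K ∧
      ∀ x : OscState N, x ∉ K →
        ∃ j ∈ Finset.Icc 1 (3 * 2 ^ (N + 1) - 5), iterLie (FOsc N U V) j (HamO N U V) x ≠ 0 := by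
  classical
  set F := FOsc N U V with hFdef
  set M := 3 * 2 ^ (N + 1) - 5 with hM
  -- bound on V'
  obtain ⟨C, hC0, hCb⟩ := Aux.Vprime_bound hN hVsm hVtop hR hVconv
  -- thresholds for U'
  have hQtex : ∀ i : ℕ, ∃ Q : ℝ, i < N → ∀ t, Q ≤ t → 2*C < deriv (U i) t := by
    intro i
    by_cases hi : i < N
    · obtain ⟨Q, hQ⟩ := Filter.eventually_atTop.1 ((hUtop i hi).eventually_gt_atTop (2*C))
      exact ⟨Q, fun _ t ht => hQ t ht⟩
    · exact ⟨0, fun h => absurd h hi⟩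
  choose Qt hQt using hQtex
  have hQbex : ∀ i : ℕ, ∃ Q : ℝ, i < N → ∀ t, t ≤ Q → deriv (U i) t < -(2*C) := by
    intro i
    by_cases hi : i < N
    · obtain ⟨Q, hQ⟩ := Filter.eventually_atBot.1 ((hUbot i hi).eventually_lt_atBot (-(2*C)))
      exact ⟨Q, fun _ t ht => hQ t ht⟩
    · exact ⟨0, fun h => absurd h hi⟩
  choose Qb hQbt using hQbex
  have hneN : (Finset.range N).Nonempty := ⟨0, Finset.mem_range.2 (by omega)⟩
  set Qmax := (Finset.range N).sup' hneN Qt with hQmax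
  set Qmin := (Finset.range N).inf' hneN Qb with hQmin
  set B : ℝ := max (max Qmax (-Qmin)) 0 with hB
  refine ⟨{x : OscState N | ∀ j ∈ Finset.Icc 1 M, iterLie F j (HamO N U V) x = 0}, ?_, ?_⟩
  · -- boundedness
    apply Bornology.IsBounded.subset (Metric.isBounded_closedBall (x := (0 : OscState N)) (r := B))
    intro x hxK
    simp only [Set.mem_setOf_eq] at hxK
    have hjets : ∀ j, 1 ≤ j → j ≤ M → iterLie F j (HamO N U V) x = 0 :=
      fun j h1 h2 => hxK j (Finset.mem_Icc.2 ⟨h1, h2⟩)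
    have hchain := Aux.chain hN hUsm hVsm hVtop hVnd x hjets
    have hp : ∀ k, k < N → Aux.PLM N k x = 0 :=
      fun k hk => hchain k hk 0 (Nat.zero_le _)
    have hlp : ∀ k, k < N → Aux.lie F (⇑(Aux.PLM N k)) x = 0 := by
      intro k hk
      have h1 : 1 ≤ N - k := by omega
      have h2 : (2:ℕ) ≤ 2 ^ (N - k) := by
        calc (2:ℕ) = 2 ^ 1 := by norm_num
        _ ≤ 2 ^ (N - k) := Nat.pow_le_pow_right (by norm_num) h1
      exact hchain k hk 1 (by omega)
    have equil : ∀ k, k < N →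
        deriv (U k) (Aux.QLM N k x)
          = (if k = 0 then 0 else deriv (V (k-1)) (Aux.RLM N (k-1) x))
            - deriv (V k) (Aux.RLM N k x) := by
      intro k hk
      have he := congrFun (Aux.lie_PLM U V k hk) x
      rw [hlp k hk] at he
      have h0 : (if k = 0 then Aux.PLM N k x else 0) = 0 := by
        split
        · exact hp k hk
        · rfl
      rw [h0] at he
      linarith [he.symm]
    -- all momenta vanish
    have hp1 : x.1 = 0 := by
      funext i
      have := hp (i : ℕ) i.2
      rwa [Aux.PLM_apply (i:ℕ) i.2, Fin.eta] at this
    -- бound the positions from above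
    have hqup : ∀ i : Fin N, x.2 i < Qmax := by
      obtain ⟨i0, _, hmax⟩ := Finset.exists_max_image Finset.univ x.2 ⟨⟨0, by omega⟩, Finset.mem_univ _⟩
      have hi0N : (i0 : ℕ) < N := i0.2
      have hQeq : Aux.QLM N (i0:ℕ) x = x.2 i0 := by
        rw [Aux.QLM_apply]
        simp [qc, dif_pos hi0N]
      -- the right interaction term
      have hright : -C ≤ deriv (V (i0:ℕ)) (Aux.RLM N (i0:ℕ) x) := by
        by_cases hlt : (i0:ℕ) < N - 1
        · have harg : 0 ≤ Aux.RLM N (i0:ℕ) x := by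
            rw [Aux.RLM_apply]
            have h1 : qc x (i0:ℕ) = x.2 i0 := by simp [qc, dif_pos hi0N]
            have h2 : qc x ((i0:ℕ)+1) = x.2 ⟨(i0:ℕ)+1, by omega⟩ := by
              simp [qc, dif_pos (show (i0:ℕ)+1 < N by omega)]
            rw [h1, h2]
            have := hmax ⟨(i0:ℕ)+1, by omega⟩ (Finset.mem_univ _)
            linarith
          exact (hCb (i0:ℕ) hlt).2 _ harg
        · have : (i0:ℕ) = N - 1 := by omega
          rw [this, Aux.dV_last hVtop]
          show -C ≤ (0:ℝ)
          linarith
      -- the left interaction term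
      have hleft : (if (i0:ℕ) = 0 then 0 else deriv (V ((i0:ℕ)-1)) (Aux.RLM N ((i0:ℕ)-1) x)) ≤ C := by
        by_cases h0 : (i0:ℕ) = 0
        · rw [if_pos h0]; linarith
        · rw [if_neg h0]
          have hji : (i0:ℕ)-1 < N - 1 := by omega
          have harg : Aux.RLM N ((i0:ℕ)-1) x ≤ 0 := by
            rw [Aux.RLM_apply]
            have h1 : qc x ((i0:ℕ)-1) = x.2 ⟨(i0:ℕ)-1, by omega⟩ := by
              simp [qc, dif_pos (show (i0:ℕ)-1 < N by omega)]
            have h2 : qc x ((i0:ℕ)-1+1) = x.2 i0 := by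
              have he : (i0:ℕ)-1+1 = (i0:ℕ) := by omega
              rw [he]
              simp [qc, dif_pos hi0N]
            rw [h1, h2]
            have := hmax ⟨(i0:ℕ)-1, by omega⟩ (Finset.mem_univ _)
            linarith
          exact (hCb ((i0:ℕ)-1) hji).1 _ harg
      have hu : deriv (U (i0:ℕ)) (x.2 i0) ≤ 2*C := by
        have := equil (i0:ℕ) hi0N
        rw [hQeq] at this
        rw [this]
        linarith
      have hq0 : x.2 i0 < Qt (i0:ℕ) := by
        by_contra hcon
        push_neg at hcon
        exact absurd hu (not_le.2 (hQt (i0:ℕ) hi0N _ hcon))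
      intro i
      calc x.2 i ≤ x.2 i0 := hmax i (Finset.mem_univ _)
      _ < Qt (i0:ℕ) := hq0
      _ ≤ Qmax := Finset.le_sup' Qt (Finset.mem_range.2 hi0N)
    -- bound the positions from below
    have hqdown : ∀ i : Fin N, Qmin < x.2 i := by
      obtain ⟨i1, _, hmin⟩ := Finset.exists_min_image Finset.univ x.2 ⟨⟨0, by omega⟩, Finset.mem_univ _⟩
      have hi1N : (i1 : ℕ) < N := i1.2
      have hQeq : Aux.QLM N (i1:ℕ) x = x.2 i1 := by
        rw [Aux.QLM_apply]
        simp [qc, dif_pos hi1N]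
      have hright : deriv (V (i1:ℕ)) (Aux.RLM N (i1:ℕ) x) ≤ C := by
        by_cases hlt : (i1:ℕ) < N - 1
        · have harg : Aux.RLM N (i1:ℕ) x ≤ 0 := by
            rw [Aux.RLM_apply]
            have h1 : qc x (i1:ℕ) = x.2 i1 := by simp [qc, dif_pos hi1N]
            have h2 : qc x ((i1:ℕ)+1) = x.2 ⟨(i1:ℕ)+1, by omega⟩ := by
              simp [qc, dif_pos (show (i1:ℕ)+1 < N by omega)]
            rw [h1, h2]
            have := hmin ⟨(i1:ℕ)+1, by omega⟩ (Finset.mem_univ _)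
            linarith
          exact (hCb (i1:ℕ) hlt).1 _ harg
        · have : (i1:ℕ) = N - 1 := by omega
          rw [this, Aux.dV_last hVtop]
          show (0:ℝ) ≤ C
          linarith
      have hleft : -C ≤ (if (i1:ℕ) = 0 then 0 else deriv (V ((i1:ℕ)-1)) (Aux.RLM N ((i1:ℕ)-1) x)) := by
        by_cases h0 : (i1:ℕ) = 0
        · rw [if_pos h0]; linarith
        · rw [if_neg h0]
          have hji : (i1:ℕ)-1 < N - 1 := by omega
          have harg : 0 ≤ Aux.RLM N ((i1:ℕ)-1) x := by
            rw [Aux.RLM_apply]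
            have h1 : qc x ((i1:ℕ)-1) = x.2 ⟨(i1:ℕ)-1, by omega⟩ := by
              simp [qc, dif_pos (show (i1:ℕ)-1 < N by omega)]
            have h2 : qc x ((i1:ℕ)-1+1) = x.2 i1 := by
              have he : (i1:ℕ)-1+1 = (i1:ℕ) := by omega
              rw [he]
              simp [qc, dif_pos hi1N]
            rw [h1, h2]
            have := hmin ⟨(i1:ℕ)-1, by omega⟩ (Finset.mem_univ _)
            linarith
          exact (hCb ((i1:ℕ)-1) hji).2 _ harg
      have hu : -(2*C) ≤ deriv (U (i1:ℕ)) (x.2 i1) := by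
        have := equil (i1:ℕ) hi1N
        rw [hQeq] at this
        rw [this]
        linarith
      have hq0 : Qb (i1:ℕ) < x.2 i1 := by
        by_contra hcon
        push_neg at hcon
        exact absurd hu (not_le.2 (hQbt (i1:ℕ) hi1N _ hcon))
      intro i
      calc Qmin ≤ Qb (i1:ℕ) := Finset.inf'_le Qb (Finset.mem_range.2 hi1N)
      _ < x.2 i1 := hq0
      _ ≤ x.2 i := hmin i (Finset.mem_univ _)
    -- conclude the norm bound
    have hBnn : (0:ℝ) ≤ B := le_max_right _ _
    have hq2 : ‖x.2‖ ≤ B := by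
      rw [pi_norm_le_iff_of_nonneg hBnn]
      intro i
      rw [Real.norm_eq_abs, abs_le]
      constructor
      · have h1 : Qmin < x.2 i := hqdown i
        have h2 : -Qmin ≤ max Qmax (-Qmin) := le_max_right _ _
        have h3 : max Qmax (-Qmin) ≤ B := le_max_left _ _
        linarith
      · have h1 : x.2 i < Qmax := hqup i
        have h2 : Qmax ≤ max Qmax (-Qmin) := le_max_left _ _
        have h3 : max Qmax (-Qmin) ≤ B := le_max_left _ _
        linarith
    have hq1 : ‖x.1‖ ≤ B := by
      rw [hp1]
      simpa using hBnn
    rw [Metric.mem_closedBall, dist_zero_right]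
    rw [Prod.norm_def]
    exact max_le hq1 hq2
  · -- points outside K have a nonvanishing Lie derivative
    intro x hx
    simp only [Set.mem_setOf_eq, not_forall] at hx
    obtain ⟨j, hj, hne⟩ := hx
    exact ⟨j, hj, hne⟩
end
end
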